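/- arXiv:2112.02358 — 3 statements merged into one kernel-verified Lean document; each statement's English description precedes it below -/
import Mathlib

section
/- For every γ ∈ (0,1) there exists a constant C = C(γ) > 0 such that for every γ-sparse family S of intervals, every A₂ weight w, and every measurable f with ‖f‖_{L²(w)} < ∞, one has ‖𝒜*_S f‖_{L^{2,∞}(w)} ≤ C · [w]_{A₂}^{3/2} · ‖f‖_{L²(w)}. -/
open MeasureTheory Set Filter
open scoped ENNReal NNReal

noncomputable section

/-- The average of `|f|` over the interval with endpoints `a < b`. -/
def avgE (f : ℝ → ℝ) (a b : ℝ) : ℝ≥0∞ :=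
  (ENNReal.ofReal (b - a))⁻¹ * ∫⁻ x in Set.Ioo a b, ENNReal.ofReal |f x|

/-- `M_B f` for the interval `B` with endpoints `a`, `b`: the supremum of the averages of `|f|`
over all bounded intervals containing `B`. -/
def MB (f : ℝ → ℝ) (a b : ℝ) : ℝ≥0∞ :=
  ⨆ (c : ℝ) (d : ℝ) (_ : c ≤ a) (_ : b ≤ d) (_ : c < d), avgE f c d

/-- The uncentered Hardy–Littlewood maximal function. -/
def maxFn (f : ℝ → ℝ) (x : ℝ) : ℝ≥0∞ :=
  ⨆ (c : ℝ) (d : ℝ) (_ : c ≤ x) (_ : x ≤ d) (_ : c < d), avgE f c d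

/-- A `γ`-sparse family of intervals, an interval being encoded by its pair of endpoints. -/
def IsSparse (γ : ℝ) (S : Set (ℝ × ℝ)) : Prop :=
  S.Countable ∧ (∀ p ∈ S, p.1 < p.2) ∧
    ∃ E : ℝ × ℝ → Set ℝ,
      (∀ p ∈ S, MeasurableSet (E p) ∧ E p ⊆ Set.Ico p.1 p.2 ∧
        ENNReal.ofReal (γ * (p.2 - p.1)) ≤ volume (E p)) ∧
      S.PairwiseDisjoint E

/-- The strong-sparse operator `𝒜*_S f = Σ_{A ∈ S} (M_A f)·1_A`. -/
def sparseOpStar (S : Set (ℝ × ℝ)) (f : ℝ → ℝ) (x : ℝ) : ℝ≥0∞ :=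
  ∑' p : S,
    (Set.Ico (p : ℝ × ℝ).1 (p : ℝ × ℝ).2).indicator
      (fun _ => MB f (p : ℝ × ℝ).1 (p : ℝ × ℝ).2) x

/-- The measure `w dx` associated with a weight `w`. -/
def wMeas (w : ℝ → ℝ) : Measure ℝ := volume.withDensity fun x => ENNReal.ofReal (w x)

/-- A weight: a positive, measurable, locally integrable function on `ℝ`. -/
def IsWeight (w : ℝ → ℝ) : Prop :=
  Measurable w ∧ (∀ x, 0 < w x) ∧ LocallyIntegrable w volume

/-- The `A₂` characteristic of a weight. -/
def A2 (w : ℝ → ℝ) : ℝ≥0∞ :=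
  ⨆ (a : ℝ) (b : ℝ) (_ : a < b), avgE w a b * avgE (fun x => (w x)⁻¹) a b

/-- The Fujii–Wilson `A∞` characteristic of a weight. -/
def AInf (w : ℝ → ℝ) : ℝ≥0∞ :=
  ⨆ (a : ℝ) (b : ℝ) (_ : a < b),
    (wMeas w (Set.Ioo a b))⁻¹ * ∫⁻ x in Set.Ioo a b, maxFn ((Set.Ioo a b).indicator w) x

/-- The `L²(w)` norm of a real-valued function. -/
def L2w (f : ℝ → ℝ) (w : ℝ → ℝ) : ℝ≥0∞ :=
  (∫⁻ x, ENNReal.ofReal (f x ^ 2) * ENNReal.ofReal (w x)) ^ (1/2 : ℝ)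

/-- The `L²(w)` norm of an `ℝ≥0∞`-valued function. -/
def L2wE (g : ℝ → ℝ≥0∞) (w : ℝ → ℝ) : ℝ≥0∞ :=
  (∫⁻ x, g x ^ 2 * ENNReal.ofReal (w x)) ^ (1/2 : ℝ)

/-- The weak-`L²(w)` quasinorm of an `ℝ≥0∞`-valued function. -/
def weakL2wE (g : ℝ → ℝ≥0∞) (w : ℝ → ℝ) : ℝ≥0∞ :=
  ⨆ (lam : ℝ) (_ : 0 < lam),
    ENNReal.ofReal lam * wMeas w {x | ENNReal.ofReal lam < g x} ^ (1/2 : ℝ)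

/-- `‖𝒜*_S‖_{L²(w) → L^{2,∞}(w)}`. -/
def opNormStrongWeak (S : Set (ℝ × ℝ)) (w : ℝ → ℝ) : ℝ≥0∞ :=
  ⨆ (f : ℝ → ℝ) (_ : Measurable f) (_ : L2w f w ≤ 1), weakL2wE (sparseOpStar S f) w

/-- `‖𝒜*_S‖_{L²(w) → L²(w)}`. -/
def opNormStrong (S : Set (ℝ × ℝ)) (w : ℝ → ℝ) : ℝ≥0∞ :=
  ⨆ (f : ℝ → ℝ) (_ : Measurable f) (_ : L2w f w ≤ 1), L2wE (sparseOpStar S f) w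

/-- `‖M‖_{L²(w) → L^{2,∞}(w)}`. -/
def maxOpNormWeak (w : ℝ → ℝ) : ℝ≥0∞ :=
  ⨆ (f : ℝ → ℝ) (_ : Measurable f) (_ : L2w f w ≤ 1), weakL2wE (maxFn f) w


namespace SparseAux

/-- Open-style maximal function w.r.t. a measure. -/
def Ho (μ : Measure ℝ) (g : ℝ → ℝ≥0∞) (x : ℝ) : ℝ≥0∞ :=
  ⨆ (c : ℝ) (d : ℝ) (_ : c < x) (_ : x < d),
    (μ (Set.Ioo c d))⁻¹ * ∫⁻ y in Set.Ioo c d, g y ∂μ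

/-- Open-style maximal function of `|f|` w.r.t. Lebesgue measure. -/
def Go (f : ℝ → ℝ) (x : ℝ) : ℝ≥0∞ :=
  ⨆ (c : ℝ) (d : ℝ) (_ : c < x) (_ : x < d), avgE f c d

lemma isOpen_gt_biSup (F : ℝ → ℝ → ℝ≥0∞) (t : ℝ≥0∞) :
    IsOpen {x : ℝ | t < ⨆ (c : ℝ) (d : ℝ) (_ : c < x) (_ : x < d), F c d} := by
  rw [isOpen_iff_mem_nhds]
  intro x hx
  simp only [mem_setOf_eq, lt_iSup_iff] at hx
  obtain ⟨c, d, hc, hd, hF⟩ := hx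
  have hsub : Set.Ioo c d ⊆ {x : ℝ | t < ⨆ (c : ℝ) (d : ℝ) (_ : c < x) (_ : x < d), F c d} := by
    intro y hy
    simp only [mem_setOf_eq, lt_iSup_iff]
    exact ⟨c, d, hy.1, hy.2, hF⟩
  exact Filter.mem_of_superset (isOpen_Ioo.mem_nhds ⟨hc, hd⟩) hsub

lemma isOpen_Ho_gt (μ : Measure ℝ) (g : ℝ → ℝ≥0∞) (t : ℝ≥0∞) :
    IsOpen {x | t < Ho μ g x} := isOpen_gt_biSup _ t

lemma isOpen_Go_gt (f : ℝ → ℝ) (t : ℝ≥0∞) :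
    IsOpen {x | t < Go f x} := isOpen_gt_biSup _ t

lemma measurable_Ho (μ : Measure ℝ) (g : ℝ → ℝ≥0∞) : Measurable (Ho μ g) :=
  measurable_of_Ioi fun t => (isOpen_Ho_gt μ g t).measurableSet

lemma measurable_Go (f : ℝ → ℝ) : Measurable (Go f) :=
  measurable_of_Ioi fun t => (isOpen_Go_gt f t).measurableSet

lemma sqE_sq (a : ℝ≥0∞) : (a ^ 2) ^ (1/2 : ℝ) = a := by
  rw [← ENNReal.rpow_two, ← ENNReal.rpow_mul]; norm_num

lemma sq_sqE (a : ℝ≥0∞) : (a ^ (1/2 : ℝ)) ^ 2 = a := by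
  rw [← ENNReal.rpow_two, ← ENNReal.rpow_mul]; norm_num

lemma sqE_mul (a b : ℝ≥0∞) : (a * b) ^ (1/2 : ℝ) = a ^ (1/2:ℝ) * b ^ (1/2:ℝ) :=
  ENNReal.mul_rpow_of_nonneg a b (by norm_num)

lemma sqE_mono {a b : ℝ≥0∞} (h : a ≤ b) : a ^ (1/2:ℝ) ≤ b ^ (1/2:ℝ) :=
  ENNReal.rpow_le_rpow h (by norm_num)

lemma le_of_sq_le_sq {a b : ℝ≥0∞} (h : a ^ 2 ≤ b ^ 2) : a ≤ b := by
  have := sqE_mono h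
  rwa [sqE_sq, sqE_sq] at this

lemma toReal_two_zpow (k : ℤ) : ((2:ℝ≥0∞) ^ k).toReal = (2:ℝ) ^ k := by
  have h : (2:ℝ≥0∞) = ((2:ℝ≥0) : ℝ≥0∞) := rfl
  rw [h, ← ENNReal.coe_zpow (by norm_num), ENNReal.coe_toReal]
  push_cast
  ring

lemma two_zpow_ne_top (k : ℤ) : ((2:ℝ≥0∞) ^ k) ≠ ∞ :=
  (ENNReal.zpow_lt_top (by norm_num) (by norm_num) _).ne

lemma two_zpow_ne_zero (k : ℤ) : ((2:ℝ≥0∞) ^ k) ≠ 0 :=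
  (ENNReal.zpow_pos (by norm_num) (by norm_num) _).ne'

/-- minimal subcover of a compact by finitely many open intervals has overlap ≤ 2. -/
lemma minimal_cover {ι : Type*} [DecidableEq ι] (t : Finset ι) (c d : ι → ℝ) (K : Set ℝ)
    (hcov : K ⊆ ⋃ i ∈ t, Set.Ioo (c i) (d i)) :
    ∃ u ⊆ t, (K ⊆ ⋃ i ∈ u, Set.Ioo (c i) (d i)) ∧
      ∀ x : ℝ, ({i ∈ u | x ∈ Set.Ioo (c i) (d i)} : Finset ι).card ≤ 2 := by
  classical
  -- the set of covering subfamilies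
  set P : Finset (Finset ι) := t.powerset.filter
      (fun u => K ⊆ ⋃ i ∈ u, Set.Ioo (c i) (d i)) with hP
  have htP : t ∈ P := by
    simp only [hP, Finset.mem_filter, Finset.mem_powerset]
    exact ⟨le_refl t, hcov⟩
  obtain ⟨u, huP, humin⟩ := P.exists_min_image Finset.card ⟨t, htP⟩
  simp only [hP, Finset.mem_filter, Finset.mem_powerset] at huP
  refine ⟨u, huP.1, huP.2, ?_⟩
  intro x
  by_contra hcard
  push_neg at hcard
  have h3 : 2 < ({i ∈ u | x ∈ Set.Ioo (c i) (d i)} : Finset ι).card := hcard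
  rw [Finset.two_lt_card_iff] at h3
  obtain ⟨a, b, e, ha, hb, he, hab, hae, hbe⟩ := h3
  simp only [Finset.mem_filter] at ha hb he
  -- v : the three indices
  set v : Finset ι := {a, b, e} with hv
  have hvcard : 2 < v.card := by
    rw [hv, Finset.card_insert_of_notMem (by simp [hab, hae]),
      Finset.card_insert_of_notMem (by simp [hbe]), Finset.card_singleton]
    omega
  have hvmem : ∀ i ∈ v, i ∈ u ∧ x ∈ Set.Ioo (c i) (d i) := by
    intro i hi
    rw [hv] at hi
    simp only [Finset.mem_insert, Finset.mem_singleton] at hi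
    rcases hi with rfl | rfl | rfl
    · exact ⟨ha.1, ha.2⟩
    · exact ⟨hb.1, hb.2⟩
    · exact ⟨he.1, he.2⟩
  -- pick m with minimal c, M with maximal d
  obtain ⟨m, hm, hmmin⟩ := v.exists_min_image c ⟨a, by simp [hv]⟩
  obtain ⟨M, hM, hMmax⟩ := v.exists_max_image d ⟨a, by simp [hv]⟩
  -- pick a third index l
  have hlex : ((v.erase m).erase M).Nonempty := by
    have h1 : 1 ≤ ((v.erase m).erase M).card := by
      have := Finset.pred_card_le_card_erase (s := v.erase m) (a := M)
      have h2 := Finset.pred_card_le_card_erase (s := v) (a := m)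
      omega
    exact Finset.card_pos.mp (by omega)
  obtain ⟨l, hl⟩ := hlex
  have hlM : l ≠ M := Finset.ne_of_mem_erase hl
  have hlm : l ≠ m := Finset.ne_of_mem_erase (Finset.mem_of_mem_erase hl)
  have hlv : l ∈ v := Finset.mem_of_mem_erase (Finset.mem_of_mem_erase hl)
  -- I_l ⊆ I_m ∪ I_M
  have hincl : Set.Ioo (c l) (d l) ⊆ Set.Ioo (c m) (d m) ∪ Set.Ioo (c M) (d M) := by
    intro y hy
    rcases le_or_gt y x with hyx | hyx
    · left
      exact ⟨lt_of_le_of_lt (hmmin l hlv) hy.1, lt_of_le_of_lt hyx (hvmem m hm).2.2⟩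
    · right
      exact ⟨lt_trans (hvmem M hM).2.1 hyx, lt_of_lt_of_le hy.2 (hMmax l hlv)⟩
  -- u.erase l still covers K
  have hcov' : K ⊆ ⋃ i ∈ u.erase l, Set.Ioo (c i) (d i) := by
    intro y hy
    have hy' := huP.2 hy
    simp only [Set.mem_iUnion, exists_prop] at hy' ⊢
    obtain ⟨i, hi, hyi⟩ := hy'
    by_cases hil : i = l
    · subst hil
      rcases hincl hyi with h | h
      · exact ⟨m, Finset.mem_erase.mpr ⟨fun hc => hlm hc.symm, (hvmem m hm).1⟩, h⟩
      · exact ⟨M, Finset.mem_erase.mpr ⟨fun hc => hlM hc.symm, (hvmem M hM).1⟩, h⟩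
    · exact ⟨i, Finset.mem_erase.mpr ⟨hil, hi⟩, hyi⟩
  have hmemP : u.erase l ∈ P := by
    simp only [hP, Finset.mem_filter, Finset.mem_powerset]
    exact ⟨le_trans (Finset.erase_subset l u) huP.1, hcov'⟩
  have hlu : l ∈ u := (hvmem l hlv).1
  have : u.card ≤ (u.erase l).card := humin _ hmemP
  rw [Finset.card_erase_of_mem hlu] at this
  have : 0 < u.card := Finset.card_pos.mpr ⟨l, hlu⟩
  omega


/-- Universal weak (1,1) inequality for the open maximal function w.r.t. any
locally finite measure on ℝ. -/
lemma W11 (μ : Measure ℝ) [IsLocallyFiniteMeasure μ] (g : ℝ → ℝ≥0∞) (hg : Measurable g)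
    (t : ℝ≥0∞) :
    t * μ {x | t < Ho μ g x} ≤ 2 * ∫⁻ y, g y ∂μ := by
  set U := {x | t < Ho μ g x} with hUdef
  have hU : IsOpen U := isOpen_Ho_gt μ g t
  have hK : ∀ K : Set ℝ, K ⊆ U → IsCompact K → t * μ K ≤ 2 * ∫⁻ y, g y ∂μ := by
    intro K hKU hKc
    have hx : ∀ x : K, ∃ c d : ℝ, c < (x : ℝ) ∧ (x : ℝ) < d ∧
        t < (μ (Set.Ioo c d))⁻¹ * ∫⁻ y in Set.Ioo c d, g y ∂μ := by
      intro x
      have hh := hKU x.2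
      simp only [hUdef, mem_setOf_eq, Ho, lt_iSup_iff] at hh
      obtain ⟨c, d, hc, hd, h⟩ := hh
      exact ⟨c, d, hc, hd, h⟩
    choose c d hc hd havg using hx
    have hcov : K ⊆ ⋃ x : K, Set.Ioo (c x) (d x) := fun y hy =>
      Set.mem_iUnion.mpr ⟨⟨y, hy⟩, hc ⟨y, hy⟩, hd ⟨y, hy⟩⟩
    obtain ⟨s, hs⟩ := hKc.elim_finite_subcover (fun x : K => Set.Ioo (c x) (d x))
      (fun _ => isOpen_Ioo) hcov
    classical
    obtain ⟨u, -, hucov, hover⟩ := minimal_cover s c d K hs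
    have hint : ∀ i : K, t * μ (Set.Ioo (c i) (d i)) ≤ ∫⁻ y in Set.Ioo (c i) (d i), g y ∂μ := by
      intro i
      rcases eq_or_ne (μ (Set.Ioo (c i) (d i))) 0 with h0 | h0
      · rw [h0, mul_zero]; exact zero_le
      have hfin : μ (Set.Ioo (c i) (d i)) ≠ ∞ :=
        (lt_of_le_of_lt (measure_mono Set.Ioo_subset_Icc_self)
          (isCompact_Icc.measure_lt_top)).ne
      calc t * μ (Set.Ioo (c i) (d i))
          ≤ ((μ (Set.Ioo (c i) (d i)))⁻¹ * ∫⁻ y in Set.Ioo (c i) (d i), g y ∂μ)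
              * μ (Set.Ioo (c i) (d i)) := mul_le_mul_left (havg i).le _
        _ = ∫⁻ y in Set.Ioo (c i) (d i), g y ∂μ := by
            rw [mul_comm ((μ (Set.Ioo (c i) (d i)))⁻¹) _, mul_assoc,
              ENNReal.inv_mul_cancel h0 hfin, mul_one]
    have hpt : ∀ y : ℝ, (∑ i ∈ u, (Set.Ioo (c i) (d i)).indicator g y) ≤ 2 * g y := by
      intro y
      have heq : ∑ i ∈ u, (Set.Ioo (c i) (d i)).indicator g y
          = ∑ i ∈ u.filter (fun i => y ∈ Set.Ioo (c i) (d i)), g y := by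
        rw [Finset.sum_filter]
        refine Finset.sum_congr rfl fun i _ => ?_
        simp [Set.indicator_apply]
      rw [heq, Finset.sum_const, nsmul_eq_mul]
      exact mul_le_mul_left (by exact_mod_cast hover y) _
    calc t * μ K ≤ t * ∑ i ∈ u, μ (Set.Ioo (c i) (d i)) :=
          mul_le_mul_right (le_trans (measure_mono hucov) (measure_biUnion_finset_le _ _)) _
      _ = ∑ i ∈ u, t * μ (Set.Ioo (c i) (d i)) := Finset.mul_sum _ _ _
      _ ≤ ∑ i ∈ u, ∫⁻ y in Set.Ioo (c i) (d i), g y ∂μ :=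
          Finset.sum_le_sum fun i _ => hint i
      _ = ∑ i ∈ u, ∫⁻ y, (Set.Ioo (c i) (d i)).indicator g y ∂μ := by
          refine Finset.sum_congr rfl fun i _ => ?_
          rw [lintegral_indicator measurableSet_Ioo]
      _ = ∫⁻ y, ∑ i ∈ u, (Set.Ioo (c i) (d i)).indicator g y ∂μ :=
          (lintegral_finset_sum u fun i _ => hg.indicator measurableSet_Ioo).symm
      _ ≤ ∫⁻ y, 2 * g y ∂μ := lintegral_mono hpt
      _ = 2 * ∫⁻ y, g y ∂μ := lintegral_const_mul 2 hg
  rw [hU.measure_eq_iSup_isCompact, ENNReal.mul_iSup]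
  refine iSup_le fun K => ?_
  rw [ENNReal.mul_iSup]
  refine iSup_le fun hKU => ?_
  rw [ENNReal.mul_iSup]
  exact iSup_le fun hKc => hK K hKU hKc

/-- From the weak-type bound, the set where `G = ∞` is null. -/
lemma null_of_weak (μ : Measure ℝ) (G : ℝ → ℝ≥0∞) {B : ℝ≥0∞} (hBt : B ≠ ∞)
    (hweak : ∀ j : ℤ, ((2:ℝ≥0∞) ^ j) ^ 2 * μ {x | (2:ℝ≥0∞) ^ j < G x} ≤ B) :
    μ {x | G x = ∞} = 0 := by
  by_contra hne
  have hpos : 0 < μ {x | G x = ∞} := pos_iff_ne_zero.mpr hne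
  have hfin : B / μ {x | G x = ∞} ≠ ∞ :=
    (ENNReal.div_lt_top hBt hne).ne
  obtain ⟨n, hn⟩ := ENNReal.exists_nat_gt hfin
  have hsub : {x | G x = ∞} ⊆ {x | (2:ℝ≥0∞) ^ (n : ℤ) < G x} := by
    intro x hx
    simp only [mem_setOf_eq] at hx ⊢
    rw [hx]
    exact (ENNReal.zpow_lt_top (by norm_num) (by norm_num) _)
  have h1 : ((2:ℝ≥0∞) ^ (n:ℤ)) ^ 2 * μ {x | G x = ∞} ≤ B :=
    le_trans (mul_le_mul_right (measure_mono hsub) _) (hweak n)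
  have h2 : (n : ℝ≥0∞) ≤ ((2:ℝ≥0∞) ^ (n:ℤ)) ^ 2 := by
    rw [zpow_natCast, ← pow_mul]
    calc (n : ℝ≥0∞) ≤ (2:ℝ≥0∞) ^ n := by
          have := Nat.lt_two_pow_self (n := n)
          exact_mod_cast Nat.cast_le.mpr this.le
      _ ≤ (2:ℝ≥0∞) ^ (n * 2) := by
          refine pow_le_pow_right₀ (by norm_num) (by omega)
  have h3 : (n : ℝ≥0∞) * μ {x | G x = ∞} ≤ B :=
    le_trans (mul_le_mul_left h2 _) h1
  have h4 : B / μ {x | G x = ∞} < (n : ℝ≥0∞) := hn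
  rw [ENNReal.div_lt_iff (Or.inl hne) (Or.inr hBt)] at h4
  exact absurd h3 (not_le.mpr h4)

/-- Dyadic Kolmogorov inequality: weak L² bound integrates to `√B √(μF)` on finite sets. -/
lemma kolmogorov (μ : Measure ℝ) (G : ℝ → ℝ≥0∞)
    (hGm : ∀ s : ℝ≥0∞, MeasurableSet {x | s < G x})
    {B : ℝ≥0∞} (hB0 : B ≠ 0) (hBt : B ≠ ∞)
    (hweak : ∀ j : ℤ, ((2:ℝ≥0∞) ^ j) ^ 2 * μ {x | (2:ℝ≥0∞) ^ j < G x} ≤ B)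
    {F : Set ℝ} (hFt : μ F ≠ ∞) :
    ∫⁻ x in F, G x ∂μ ≤ 6 * B ^ (1/2:ℝ) * (μ F) ^ (1/2:ℝ) := by
  rcases eq_or_ne (μ F) 0 with hF0 | hF0
  · rw [setLIntegral_measure_zero _ _ hF0]
    exact zero_le
  -- choose j₀ with x < 2^(2 j₀) ≤ 4 x, where x = B / μ F
  set x := B / μ F with hx
  have hx0 : x ≠ 0 := by
    rw [hx]
    simp only [ne_eq, ENNReal.div_eq_zero_iff, not_or]
    exact ⟨hB0, hFt⟩
  have hxt : x ≠ ∞ := (ENNReal.div_lt_top hBt hF0).ne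
  obtain ⟨n, hn1, hn2⟩ := exists_mem_Ico_zpow (x := x.toReal) (y := 2)
    (ENNReal.toReal_pos hx0 hxt) one_lt_two
  obtain ⟨m, hm⟩ : ∃ m : ℤ, 2 * m = n + 1 ∨ 2 * m = n + 2 := by
    rcases Int.even_or_odd n with ⟨p, hp⟩ | ⟨p, hp⟩
    · exact ⟨p + 1, Or.inr (by omega)⟩
    · exact ⟨p + 1, Or.inl (by omega)⟩
  set j₀ := m with hj₀
  have hxlt : x < (2:ℝ≥0∞) ^ (2 * j₀) := by
    have hlt : x.toReal < ((2:ℝ≥0∞) ^ (2*j₀)).toReal := by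
      rw [toReal_two_zpow]
      calc x.toReal < (2:ℝ) ^ (n + 1) := hn2
        _ ≤ (2:ℝ) ^ (2 * j₀) := by
            apply zpow_le_zpow_right₀ one_le_two
            omega
    exact (ENNReal.toReal_lt_toReal hxt (two_zpow_ne_top _)).mp hlt
  have hxge : (2:ℝ≥0∞) ^ (2 * j₀) ≤ 4 * x := by
    have hle : ((2:ℝ≥0∞) ^ (2*j₀)).toReal ≤ (4 * x).toReal := by
      have h44 : ((4:ℝ≥0∞) * x).toReal = 4 * x.toReal := by
        rw [ENNReal.toReal_mul]
        norm_num
      rw [toReal_two_zpow, h44]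
      calc (2:ℝ) ^ (2 * j₀) ≤ (2:ℝ) ^ (n + 2) := by
            apply zpow_le_zpow_right₀ one_le_two
            omega
        _ = 4 * (2:ℝ) ^ n := by
            rw [zpow_add₀ (by norm_num : (2:ℝ) ≠ 0)]
            norm_num
            ring
        _ ≤ 4 * x.toReal := by nlinarith [hn1]
    have h4xt : (4 : ℝ≥0∞) * x ≠ ∞ := ENNReal.mul_ne_top (by norm_num) hxt
    exact (ENNReal.toReal_le_toReal (two_zpow_ne_top _) h4xt).mp hle
  -- helper facts
  have hBh0 : B ^ (1/2:ℝ) ≠ 0 := by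
    simp [ENNReal.rpow_eq_zero_iff, hB0, hBt]
  have h2j : (2:ℝ≥0∞) ^ (2*j₀) = ((2:ℝ≥0∞) ^ j₀) ^ 2 := by
    rw [two_mul, ENNReal.zpow_add (by norm_num) (by norm_num), pow_two]
  have hBF : B / μ F * μ F = B := ENNReal.div_mul_cancel hF0 hFt
  -- first : 2^{j₀} * μF ≤ 2 √B √μF
  have hfirst : (2:ℝ≥0∞) ^ j₀ * μ F ≤ 2 * B ^ (1/2:ℝ) * (μ F) ^ (1/2:ℝ) := by
    refine le_of_sq_le_sq ?_
    have hL : ((2:ℝ≥0∞) ^ j₀ * μ F) ^ 2 ≤ 4 * B * μ F := by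
      calc ((2:ℝ≥0∞) ^ j₀ * μ F) ^ 2 = ((2:ℝ≥0∞) ^ j₀) ^ 2 * (μ F * μ F) := by ring
        _ ≤ (4 * x) * (μ F * μ F) := by
            rw [← h2j]; exact mul_le_mul_left hxge _
        _ = 4 * (x * μ F) * μ F := by ring
        _ = 4 * B * μ F := by rw [hx, hBF]
    have hR : (2 * B ^ (1/2:ℝ) * (μ F) ^ (1/2:ℝ)) ^ 2 = 4 * B * μ F := by
      calc (2 * B ^ (1/2:ℝ) * (μ F) ^ (1/2:ℝ)) ^ 2
          = 4 * (B ^ (1/2:ℝ)) ^ 2 * ((μ F) ^ (1/2:ℝ)) ^ 2 := by ring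
        _ = 4 * B * μ F := by rw [sq_sqE, sq_sqE]
    rw [hR]; exact hL
  -- second : 4 B 2^{-j₀} ≤ 4 √B √μF
  have hsecond : 4 * B * ((2:ℝ≥0∞) ^ j₀)⁻¹ ≤ 4 * B ^ (1/2:ℝ) * (μ F) ^ (1/2:ℝ) := by
    refine le_of_sq_le_sq ?_
    have hxinv : (((2:ℝ≥0∞) ^ j₀) ^ 2)⁻¹ ≤ x⁻¹ := ENNReal.inv_le_inv.mpr (h2j ▸ hxlt.le)
    have hxB : x⁻¹ = μ F / B := by
      rw [hx, ENNReal.inv_div (Or.inr hBt) (Or.inr hB0)]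
    have hL : (4 * B * ((2:ℝ≥0∞) ^ j₀)⁻¹) ^ 2 ≤ 16 * B * μ F := by
      calc (4 * B * ((2:ℝ≥0∞) ^ j₀)⁻¹) ^ 2
          = 16 * (B * B) * (((2:ℝ≥0∞) ^ j₀)⁻¹) ^ 2 := by ring
        _ = 16 * (B * B) * (((2:ℝ≥0∞) ^ j₀) ^ 2)⁻¹ := by rw [← ENNReal.inv_pow]
        _ ≤ 16 * (B * B) * (μ F / B) := by
            rw [← hxB]; exact mul_le_mul_right hxinv _
        _ = 16 * B * (μ F / B * B) := by ring
        _ = 16 * B * μ F := by rw [ENNReal.div_mul_cancel hB0 hBt]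
    have hR : (4 * B ^ (1/2:ℝ) * (μ F) ^ (1/2:ℝ)) ^ 2 = 16 * B * μ F := by
      calc (4 * B ^ (1/2:ℝ) * (μ F) ^ (1/2:ℝ)) ^ 2
          = 16 * (B ^ (1/2:ℝ)) ^ 2 * ((μ F) ^ (1/2:ℝ)) ^ 2 := by ring
        _ = 16 * B * μ F := by rw [sq_sqE, sq_sqE]
    rw [hR]; exact hL
  -- the dyadic majorant
  set Sind : ℕ → ℝ → ℝ≥0∞ := fun k =>
    ({x | (2:ℝ≥0∞) ^ (j₀ + (k:ℤ)) < G x}).indicator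
      (fun _ => (2:ℝ≥0∞) ^ (j₀ + (k:ℤ) + 1)) with hSind
  have hptwise : ∀ y : ℝ, G y ≠ ∞ →
      G y ≤ (2:ℝ≥0∞) ^ j₀ + ∑' k : ℕ, Sind k y := by
    intro y hGy
    rcases le_or_gt (G y) ((2:ℝ≥0∞) ^ j₀) with hle | hlt
    · exact hle.trans le_self_add
    have hex : ∃ k : ℕ, G y ≤ (2:ℝ≥0∞) ^ (j₀ + (k:ℤ) + 1) := by
      have hfin2 : G y / (2:ℝ≥0∞) ^ (j₀ + 1) ≠ ∞ :=
        (ENNReal.div_lt_top hGy (two_zpow_ne_zero _)).ne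
      obtain ⟨p, hp⟩ := ENNReal.exists_nat_gt hfin2
      refine ⟨p, ?_⟩
      have hcast : (p : ℝ≥0∞) ≤ (2:ℝ≥0∞) ^ (p:ℤ) := by
        rw [zpow_natCast]
        exact_mod_cast Nat.cast_le.mpr (Nat.lt_two_pow_self (n := p)).le
      have hp2 : G y / (2:ℝ≥0∞) ^ (j₀ + 1) < (2:ℝ≥0∞) ^ (p:ℤ) := lt_of_lt_of_le hp hcast
      rw [ENNReal.div_lt_iff (Or.inl (two_zpow_ne_zero _)) (Or.inl (two_zpow_ne_top _))] at hp2
      calc G y ≤ (2:ℝ≥0∞) ^ (p:ℤ) * (2:ℝ≥0∞) ^ (j₀ + 1) := hp2.le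
        _ = (2:ℝ≥0∞) ^ (j₀ + (p:ℤ) + 1) := by
            rw [← ENNReal.zpow_add (by norm_num) (by norm_num)]
            ring_nf
    set k := Nat.find hex with hkdef
    have hk : G y ≤ (2:ℝ≥0∞) ^ (j₀ + (k:ℤ) + 1) := Nat.find_spec hex
    have hmem : y ∈ {x | (2:ℝ≥0∞) ^ (j₀ + (k:ℤ)) < G x} := by
      rcases Nat.eq_zero_or_pos k with hk0 | hkpos
      · simp only [mem_setOf_eq, hk0, Nat.cast_zero, add_zero]
        exact hlt
      · obtain ⟨m, hm'⟩ := Nat.exists_eq_succ_of_ne_zero hkpos.ne'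
        have hmin := Nat.find_min hex (m := m) (by omega)
        push_neg at hmin
        simp only [mem_setOf_eq]
        have : j₀ + (k:ℤ) = j₀ + (m:ℤ) + 1 := by
          rw [hm']
          push_cast
          ring
        rw [this]
        exact hmin
    calc G y ≤ Sind k y := by
          rw [hSind]
          simp only [Set.indicator_of_mem hmem]
          exact hk
      _ ≤ ∑' k : ℕ, Sind k y := ENNReal.le_tsum k
      _ ≤ (2:ℝ≥0∞) ^ j₀ + ∑' k : ℕ, Sind k y := le_add_self
  have hae : ∀ᵐ y ∂(μ.restrict F), G y ≤ (2:ℝ≥0∞) ^ j₀ + ∑' k : ℕ, Sind k y := by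
    refine ae_restrict_of_ae ?_
    have hnull := null_of_weak μ G hBt hweak
    have : ∀ᵐ y ∂μ, G y ≠ ∞ := by
      rw [ae_iff]
      simpa using hnull
    filter_upwards [this] with y hy using hptwise y hy
  -- integral computation
  have hperk : ∀ k : ℕ, (∫⁻ y in F, Sind k y ∂μ) ≤
      (2 * B * ((2:ℝ≥0∞) ^ j₀)⁻¹) * (2⁻¹ : ℝ≥0∞) ^ k := by
    intro k
    obtain ⟨a, ha⟩ : ∃ a : ℤ, a = j₀ + (k : ℤ) := ⟨j₀ + (k : ℤ), rfl⟩
    have hS : (∫⁻ y in F, Sind k y ∂μ) ≤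
        (2:ℝ≥0∞) ^ (a + 1) * μ {x | (2:ℝ≥0∞) ^ a < G x} := by
      rw [ha, hSind, lintegral_indicator (hGm _), setLIntegral_const]
      exact mul_le_mul_right (Measure.restrict_apply_le _ _) _
    have hmu : μ {x | (2:ℝ≥0∞) ^ a < G x} ≤ (((2:ℝ≥0∞) ^ a) ^ 2)⁻¹ * B := by
      have h0 : ((2:ℝ≥0∞) ^ a) ^ 2 ≠ 0 := pow_ne_zero 2 (two_zpow_ne_zero a)
      have ht : ((2:ℝ≥0∞) ^ a) ^ 2 ≠ ∞ := ENNReal.pow_ne_top (two_zpow_ne_top a)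
      calc μ {x | (2:ℝ≥0∞) ^ a < G x}
          = (((2:ℝ≥0∞) ^ a) ^ 2)⁻¹ * (((2:ℝ≥0∞) ^ a) ^ 2 * μ {x | (2:ℝ≥0∞) ^ a < G x}) := by
            rw [← mul_assoc, ENNReal.inv_mul_cancel h0 ht, one_mul]
        _ ≤ (((2:ℝ≥0∞) ^ a) ^ 2)⁻¹ * B := mul_le_mul_right (hweak a) _
    have hzpow : (2:ℝ≥0∞) ^ (a + 1) * (((2:ℝ≥0∞) ^ a) ^ 2)⁻¹ =
        2 * ((2:ℝ≥0∞) ^ j₀)⁻¹ * (2⁻¹ : ℝ≥0∞) ^ k := by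
      have h1 : ((2:ℝ≥0∞) ^ a) ^ 2 = (2:ℝ≥0∞) ^ (a + a) := by
        rw [pow_two, ENNReal.zpow_add (by norm_num) (by norm_num)]
      rw [h1, ← ENNReal.zpow_neg,
        ← ENNReal.zpow_add (by norm_num) (by norm_num)]
      have h2 : a + 1 + -(a + a) = 1 + (-j₀) + (-(k:ℤ)) := by rw [ha]; ring
      rw [h2, ENNReal.zpow_add (by norm_num) (by norm_num),
        ENNReal.zpow_add (by norm_num) (by norm_num),
        ENNReal.zpow_neg _ (k:ℤ),
        ENNReal.zpow_neg _ j₀, zpow_one, zpow_natCast,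
        ENNReal.inv_pow]
    calc (∫⁻ y in F, Sind k y ∂μ)
        ≤ (2:ℝ≥0∞) ^ (a + 1) * ((((2:ℝ≥0∞) ^ a) ^ 2)⁻¹ * B) :=
          hS.trans (mul_le_mul_right hmu _)
      _ = ((2:ℝ≥0∞) ^ (a + 1) * (((2:ℝ≥0∞) ^ a) ^ 2)⁻¹) * B := by ring
      _ = (2 * ((2:ℝ≥0∞) ^ j₀)⁻¹ * (2⁻¹ : ℝ≥0∞) ^ k) * B := by rw [hzpow]
      _ = (2 * B * ((2:ℝ≥0∞) ^ j₀)⁻¹) * (2⁻¹ : ℝ≥0∞) ^ k := by ring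
  have hint : ∫⁻ y in F, ((2:ℝ≥0∞) ^ j₀ + ∑' k : ℕ, Sind k y) ∂μ ≤
      (2:ℝ≥0∞) ^ j₀ * μ F + 4 * B * ((2:ℝ≥0∞) ^ j₀)⁻¹ := by
    rw [lintegral_add_left measurable_const, setLIntegral_const]
    refine add_le_add_right ?_ _
    rw [lintegral_tsum (fun k => (measurable_const.indicator (hGm _)).aemeasurable)]
    calc (∑' k : ℕ, ∫⁻ y in F, Sind k y ∂μ)
        ≤ ∑' k : ℕ, (2 * B * ((2:ℝ≥0∞) ^ j₀)⁻¹) * (2⁻¹ : ℝ≥0∞) ^ k :=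
          ENNReal.tsum_le_tsum hperk
      _ = (2 * B * ((2:ℝ≥0∞) ^ j₀)⁻¹) * ∑' k : ℕ, (2⁻¹ : ℝ≥0∞) ^ k :=
          ENNReal.tsum_mul_left
      _ = (2 * B * ((2:ℝ≥0∞) ^ j₀)⁻¹) * 2 := by
          rw [ENNReal.tsum_geometric, ENNReal.one_sub_inv_two, inv_inv]
      _ = 4 * B * ((2:ℝ≥0∞) ^ j₀)⁻¹ := by ring
  calc ∫⁻ y in F, G y ∂μ
      ≤ ∫⁻ y in F, ((2:ℝ≥0∞) ^ j₀ + ∑' k : ℕ, Sind k y) ∂μ := lintegral_mono_ae hae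
    _ ≤ (2:ℝ≥0∞) ^ j₀ * μ F + 4 * B * ((2:ℝ≥0∞) ^ j₀)⁻¹ := hint
    _ ≤ 2 * B ^ (1/2:ℝ) * (μ F) ^ (1/2:ℝ) + 4 * B ^ (1/2:ℝ) * (μ F) ^ (1/2:ℝ) :=
        add_le_add hfirst hsecond
    _ = 6 * B ^ (1/2:ℝ) * (μ F) ^ (1/2:ℝ) := by ring

/-- The Lorentz-type pairing estimate. -/
lemma pairing (μ : Measure ℝ) (G H : ℝ → ℝ≥0∞) (hGmble : Measurable G)
    (hGm : ∀ s : ℝ≥0∞, MeasurableSet {x | s < G x})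
    (hHm : ∀ t : ℝ≥0∞, MeasurableSet {x | t < H x})
    {B : ℝ≥0∞} (hB0 : B ≠ 0) (hBt : B ≠ ∞)
    (hweak : ∀ j : ℤ, ((2:ℝ≥0∞) ^ j) ^ 2 * μ {x | (2:ℝ≥0∞) ^ j < G x} ≤ B)
    {e : ℝ≥0∞} (het : e ≠ ∞) (hH1 : ∀ x, H x ≤ 1)
    (hHweak : ∀ t : ℝ≥0∞, 0 < t → t * μ {x | t < H x} ≤ 2 * e) :
    ∫⁻ x, G x * H x ∂μ ≤ 48 * B ^ (1/2:ℝ) * e ^ (1/2:ℝ) := by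
  have h4k0 : ∀ k : ℕ, ((4:ℝ≥0∞) ^ k) ≠ 0 := fun k => pow_ne_zero k (by norm_num)
  have h4kt : ∀ k : ℕ, ((4:ℝ≥0∞) ^ k) ≠ ∞ := fun k => ENNReal.pow_ne_top (by norm_num)
  set F : ℕ → Set ℝ := fun k => {x | (((4:ℝ≥0∞) ^ (k+1))⁻¹) < H x} with hF
  have hFmeas : ∀ k, MeasurableSet (F k) := fun k => hHm _
  have hμF : ∀ k, μ (F k) ≤ (4:ℝ≥0∞) ^ (k+2) * e := by
    intro k
    have ht0 : (0:ℝ≥0∞) < ((4:ℝ≥0∞) ^ (k+1))⁻¹ := ENNReal.inv_pos.mpr (h4kt (k+1))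
    have h1 := hHweak _ ht0
    calc μ (F k) = ((4:ℝ≥0∞) ^ (k+1)) * (((4:ℝ≥0∞) ^ (k+1))⁻¹ * μ (F k)) := by
          rw [← mul_assoc, ENNReal.mul_inv_cancel (h4k0 (k+1)) (h4kt (k+1)), one_mul]
      _ ≤ ((4:ℝ≥0∞) ^ (k+1)) * (2 * e) := mul_le_mul_right h1 _
      _ ≤ ((4:ℝ≥0∞) ^ (k+1)) * (4 * e) := by
          exact mul_le_mul_right (mul_le_mul_left (by norm_num) _) _
      _ = (4:ℝ≥0∞) ^ (k+2) * e := by rw [pow_succ, pow_succ]; ring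
  have hμFt : ∀ k, μ (F k) ≠ ∞ := fun k =>
    (lt_of_le_of_lt (hμF k) (ENNReal.mul_lt_top (ENNReal.pow_lt_top (by norm_num))
      het.lt_top)).ne
  -- pointwise domination
  have hpt : ∀ x : ℝ, G x * H x ≤ ∑' k : ℕ, ((4:ℝ≥0∞) ^ k)⁻¹ * (F k).indicator G x := by
    intro x
    rcases eq_or_ne (H x) 0 with hH0 | hH0
    · rw [hH0, mul_zero]; exact zero_le
    have hex : ∃ k : ℕ, ((4:ℝ≥0∞) ^ (k+1))⁻¹ < H x := by
      have hiv : (H x)⁻¹ ≠ ∞ := by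
        rw [ENNReal.inv_ne_top]; exact hH0
      obtain ⟨p, hp⟩ := ENNReal.exists_nat_gt hiv
      refine ⟨p, ?_⟩
      have hcast : (p : ℝ≥0∞) ≤ (4:ℝ≥0∞) ^ (p+1) := by
        calc (p : ℝ≥0∞) ≤ (2:ℝ≥0∞) ^ p := by
              exact_mod_cast Nat.cast_le.mpr (Nat.lt_two_pow_self (n := p)).le
          _ ≤ (4:ℝ≥0∞) ^ p := pow_le_pow_left₀ (by norm_num) (by norm_num) p
          _ ≤ (4:ℝ≥0∞) ^ (p+1) := pow_le_pow_right₀ (by norm_num) (by omega)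
      have h2 : (H x)⁻¹ < (4:ℝ≥0∞) ^ (p+1) := lt_of_lt_of_le hp hcast
      have h3 := ENNReal.inv_lt_inv.mpr h2
      rwa [inv_inv] at h3
    set k₀ := Nat.find hex with hk₀def
    have hk₀ : ((4:ℝ≥0∞) ^ (k₀+1))⁻¹ < H x := Nat.find_spec hex
    have hmem : x ∈ F k₀ := hk₀
    have hHle : H x ≤ ((4:ℝ≥0∞) ^ k₀)⁻¹ := by
      rcases Nat.eq_zero_or_pos k₀ with h0 | hpos
      · rw [h0, pow_zero, inv_one]; exact hH1 x
      · obtain ⟨m, hm⟩ := Nat.exists_eq_succ_of_ne_zero hpos.ne'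
        have hmin := Nat.find_min hex (m := m) (by omega)
        push_neg at hmin
        rw [hm]
        exact hmin
    calc G x * H x ≤ G x * ((4:ℝ≥0∞) ^ k₀)⁻¹ := mul_le_mul_right hHle _
      _ = ((4:ℝ≥0∞) ^ k₀)⁻¹ * (F k₀).indicator G x := by
          rw [Set.indicator_of_mem hmem, mul_comm]
      _ ≤ ∑' k : ℕ, ((4:ℝ≥0∞) ^ k)⁻¹ * (F k).indicator G x := ENNReal.le_tsum k₀
  -- integrate
  have h2k0 : ∀ k : ℕ, ((2:ℝ≥0∞) ^ k) ≠ 0 := fun k => pow_ne_zero k (by norm_num)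
  have h2kt : ∀ k : ℕ, ((2:ℝ≥0∞) ^ k) ≠ ∞ := fun k => ENNReal.pow_ne_top (by norm_num)
  calc ∫⁻ x, G x * H x ∂μ
      ≤ ∫⁻ x, ∑' k : ℕ, ((4:ℝ≥0∞) ^ k)⁻¹ * (F k).indicator G x ∂μ := lintegral_mono hpt
    _ = ∑' k : ℕ, ∫⁻ x, ((4:ℝ≥0∞) ^ k)⁻¹ * (F k).indicator G x ∂μ :=
        lintegral_tsum fun k => ((hGmble.indicator (hFmeas k)).const_mul _).aemeasurable
    _ ≤ ∑' k : ℕ, (24 * B ^ (1/2:ℝ) * e ^ (1/2:ℝ)) * ((2:ℝ≥0∞)⁻¹) ^ k := by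
        refine ENNReal.tsum_le_tsum fun k => ?_
        rw [lintegral_const_mul _ (hGmble.indicator (hFmeas k)),
          lintegral_indicator (hFmeas k)]
        have hkol : ∫⁻ x in F k, G x ∂μ ≤ 6 * B ^ (1/2:ℝ) * (μ (F k)) ^ (1/2:ℝ) :=
          kolmogorov μ G hGm hB0 hBt hweak (hμFt k)
        have hsq : (μ (F k)) ^ (1/2:ℝ) ≤ (2:ℝ≥0∞) ^ (k+2) * e ^ (1/2:ℝ) := by
          have h1 : μ (F k) ≤ ((2:ℝ≥0∞) ^ (k+2)) ^ 2 * e := by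
            refine (hμF k).trans (le_of_eq ?_)
            rw [← pow_mul]
            congr 1
            rw [show (4:ℝ≥0∞) = 2 ^ 2 by norm_num, ← pow_mul]
            ring_nf
          calc (μ (F k)) ^ (1/2:ℝ) ≤ (((2:ℝ≥0∞) ^ (k+2)) ^ 2 * e) ^ (1/2:ℝ) := sqE_mono h1
            _ = (2:ℝ≥0∞) ^ (k+2) * e ^ (1/2:ℝ) := by rw [sqE_mul, sqE_sq]
        calc ((4:ℝ≥0∞) ^ k)⁻¹ * ∫⁻ x in F k, G x ∂μ
            ≤ ((4:ℝ≥0∞) ^ k)⁻¹ * (6 * B ^ (1/2:ℝ) * ((2:ℝ≥0∞) ^ (k+2) * e ^ (1/2:ℝ))) :=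
              mul_le_mul_right (hkol.trans (mul_le_mul_right hsq _)) _
          _ = (6 * B ^ (1/2:ℝ) * e ^ (1/2:ℝ)) * (((4:ℝ≥0∞) ^ k)⁻¹ * (2:ℝ≥0∞) ^ (k+2)) := by
              ring
          _ = (24 * B ^ (1/2:ℝ) * e ^ (1/2:ℝ)) * ((2:ℝ≥0∞)⁻¹) ^ k := by
              have h44 : ((4:ℝ≥0∞) ^ k)⁻¹ * (2:ℝ≥0∞) ^ (k+2) = 4 * ((2:ℝ≥0∞)⁻¹) ^ k := by
                have h4eq : (4:ℝ≥0∞) ^ k = (2:ℝ≥0∞) ^ k * (2:ℝ≥0∞) ^ k := by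
                  rw [← mul_pow]; norm_num
                rw [h4eq, pow_add, ENNReal.mul_inv (Or.inl (h2k0 k)) (Or.inl (h2kt k))]
                calc ((2:ℝ≥0∞) ^ k)⁻¹ * ((2:ℝ≥0∞) ^ k)⁻¹ * ((2:ℝ≥0∞) ^ k * 2 ^ 2)
                    = (((2:ℝ≥0∞) ^ k)⁻¹ * (2:ℝ≥0∞) ^ k) * (2 ^ 2 * ((2:ℝ≥0∞) ^ k)⁻¹) := by
                      ring
                  _ = 4 * ((2:ℝ≥0∞)⁻¹) ^ k := by
                      rw [ENNReal.inv_mul_cancel (h2k0 k) (h2kt k), one_mul, ENNReal.inv_pow]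
                      norm_num
              rw [h44]; ring
    _ = (24 * B ^ (1/2:ℝ) * e ^ (1/2:ℝ)) * ∑' k : ℕ, ((2:ℝ≥0∞)⁻¹) ^ k :=
        ENNReal.tsum_mul_left
    _ = 48 * B ^ (1/2:ℝ) * e ^ (1/2:ℝ) := by
        rw [ENNReal.tsum_geometric, ENNReal.one_sub_inv_two, inv_inv]
        ring

/-- `MB f a b` is dominated by the open maximal function inside the open interval. -/
lemma MB_le_Go (f : ℝ → ℝ) {a b x : ℝ} (hx : x ∈ Set.Ioo a b) : MB f a b ≤ Go f x := by
  refine iSup_le fun c => iSup_le fun d => iSup_le fun hca => iSup_le fun hbd =>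
    iSup_le fun hcd => ?_
  exact le_iSup₂_of_le c d (le_iSup_of_le (lt_of_le_of_lt hca hx.1)
    (le_iSup_of_le (lt_of_lt_of_le hx.2 hbd) le_rfl))

lemma Ho_lower (μ : Measure ℝ) (g : ℝ → ℝ≥0∞) {a b x : ℝ} (hx : x ∈ Set.Ioo a b) :
    (μ (Set.Ioo a b))⁻¹ * ∫⁻ y in Set.Ioo a b, g y ∂μ ≤ Ho μ g x :=
  le_iSup₂_of_le a b (le_iSup_of_le hx.1 (le_iSup_of_le hx.2 le_rfl))


section Weight
variable {w : ℝ → ℝ} (hw : IsWeight w)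

lemma wMeas_apply {s : Set ℝ} (hs : MeasurableSet s) :
    wMeas w s = ∫⁻ x in s, ENNReal.ofReal (w x) := withDensity_apply _ hs

lemma wMeas_singleton (a : ℝ) : wMeas w {a} = 0 := by
  rw [wMeas_apply (measurableSet_singleton a)]
  exact setLIntegral_measure_zero _ _ (by simp)

include hw

lemma wMeas_Ioo_ne_top (a b : ℝ) : wMeas w (Set.Ioo a b) ≠ ∞ := by
  rw [wMeas_apply measurableSet_Ioo]
  have hint : IntegrableOn w (Set.Icc a b) volume :=
    hw.2.2.integrableOn_isCompact isCompact_Icc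
  exact (lt_of_le_of_lt (lintegral_mono_set Set.Ioo_subset_Icc_self)
    hint.setLIntegral_lt_top).ne

lemma locFinite : IsLocallyFiniteMeasure (wMeas w) := by
  constructor
  intro x
  refine ⟨Set.Ioo (x - 1) (x + 1), Ioo_mem_nhds (by linarith) (by linarith), ?_⟩
  exact (wMeas_Ioo_ne_top hw _ _).lt_top

lemma wMeas_Ioo_ne_zero {a b : ℝ} (hab : a < b) : wMeas w (Set.Ioo a b) ≠ 0 := by
  intro h0
  rw [wMeas_apply measurableSet_Ioo] at h0
  have hmble : Measurable fun x => ENNReal.ofReal (w x) :=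
    ENNReal.measurable_ofReal.comp hw.1
  rw [setLIntegral_eq_zero_iff measurableSet_Ioo hmble] at h0
  have h2 : ∀ᵐ x ∂(volume : Measure ℝ), x ∉ Set.Ioo a b := by
    filter_upwards [h0] with x hx
    intro hmem
    have h3 := hx hmem
    rw [ENNReal.ofReal_eq_zero] at h3
    exact absurd h3 (not_le.mpr (hw.2.1 x))
  have hvol : (volume : Measure ℝ) (Set.Ioo a b) = 0 := by
    rw [ae_iff] at h2
    have hset : Set.Ioo a b = {x : ℝ | ¬ x ∉ Set.Ioo a b} := by
      ext x; simp
    rw [hset]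
    exact h2
  rw [Real.volume_Ioo] at hvol
  rw [ENNReal.ofReal_eq_zero] at hvol
  linarith

omit hw in
lemma wMeas_Ico (a b : ℝ) : wMeas w (Set.Ico a b) = wMeas w (Set.Ioo a b) := by
  rcases le_or_gt b a with h | h
  · rw [Set.Ico_eq_empty (by exact fun hc => absurd h (not_le.mpr hc)),
      Set.Ioo_eq_empty (by exact fun hc => absurd h (not_le.mpr hc))]
  · refine le_antisymm ?_ (measure_mono Set.Ioo_subset_Ico_self)
    rw [← Set.Ioo_insert_left h]
    calc wMeas w (insert a (Set.Ioo a b)) ≤ wMeas w {a} + wMeas w (Set.Ioo a b) := by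
          rw [← Set.singleton_union]; exact measure_union_le _ _
      _ = wMeas w (Set.Ioo a b) := by rw [wMeas_singleton, zero_add]

omit hw in
lemma le_A2 {a b : ℝ} (hab : a < b) :
    avgE w a b * avgE (fun x => (w x)⁻¹) a b ≤ A2 w :=
  le_iSup₂_of_le a b (le_iSup_of_le hab le_rfl)

omit hw in
lemma avgE_eq_of_pos {g : ℝ → ℝ} (hg : ∀ x, 0 < g x) (a b : ℝ) :
    avgE g a b = (ENNReal.ofReal (b - a))⁻¹ * ∫⁻ x in Set.Ioo a b, ENNReal.ofReal (g x) := by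
  unfold avgE
  congr 1
  refine lintegral_congr fun x => ?_
  rw [abs_of_pos (hg x)]

/-- key product bound : `μ(I) * ∫_I w⁻¹ ≤ A2 * |I|²`. -/
lemma key_prod {a b : ℝ} (hab : a < b) :
    wMeas w (Set.Ioo a b) * (∫⁻ x in Set.Ioo a b, ENNReal.ofReal (w x)⁻¹) ≤
      A2 w * (ENNReal.ofReal (b - a)) ^ 2 := by
  set L := ENNReal.ofReal (b - a) with hL
  set W := ∫⁻ x in Set.Ioo a b, ENNReal.ofReal (w x) with hW
  set Sg := ∫⁻ x in Set.Ioo a b, ENNReal.ofReal (w x)⁻¹ with hS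
  have hL0 : L ≠ 0 := by
    rw [hL]
    exact (ENNReal.ofReal_pos.mpr (by linarith)).ne'
  have hLt : L ≠ ∞ := ENNReal.ofReal_ne_top
  have hc : L * L⁻¹ = 1 := ENNReal.mul_inv_cancel hL0 hLt
  have havg : (L⁻¹ * W) * (L⁻¹ * Sg) ≤ A2 w := by
    have h1 : avgE w a b = L⁻¹ * W := avgE_eq_of_pos hw.2.1 a b
    have h2 : avgE (fun x => (w x)⁻¹) a b = L⁻¹ * Sg :=
      avgE_eq_of_pos (fun x => inv_pos.mpr (hw.2.1 x)) a b
    rw [← h1, ← h2]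
    exact le_A2 hab
  have hWS : W * Sg = L ^ 2 * ((L⁻¹ * W) * (L⁻¹ * Sg)) := by
    have : L ^ 2 * ((L⁻¹ * W) * (L⁻¹ * Sg)) = (L * L⁻¹) * ((L * L⁻¹) * (W * Sg)) := by ring
    rw [this, hc, one_mul, one_mul]
  rw [wMeas_apply measurableSet_Ioo, ← hW, hWS, mul_comm (A2 w) (L^2)]
  exact mul_le_mul_right havg _

/-- pointwise CS decomposition of |f| -/
lemma ofReal_abs_decomp (f : ℝ → ℝ) (x : ℝ) (hwx : 0 < w x) :
    ENNReal.ofReal |f x| =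
      ENNReal.ofReal (f x ^ 2 * w x) ^ (1/2 : ℝ) * ENNReal.ofReal ((w x)⁻¹) ^ (1/2 : ℝ) := by
  rw [ENNReal.ofReal_rpow_of_nonneg (by positivity) (by norm_num),
    ENNReal.ofReal_rpow_of_nonneg (by positivity) (by norm_num),
    ← ENNReal.ofReal_mul (by positivity)]
  congr 1
  rw [← Real.mul_rpow (by positivity) (by positivity)]
  rw [mul_assoc, mul_inv_cancel₀ hwx.ne', mul_one]
  rw [← sq_abs (f x), ← Real.rpow_natCast |f x| 2, ← Real.rpow_mul (abs_nonneg _)]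
  norm_num

/-- Buckley per-interval estimate. -/
lemma buckley_interval {f : ℝ → ℝ} (hf : Measurable f) {c d : ℝ} (hcd : c < d) :
    avgE f c d ^ 2 ≤ A2 w *
      ((wMeas w (Set.Ioo c d))⁻¹ *
        ∫⁻ x in Set.Ioo c d, ENNReal.ofReal (f x ^ 2) ∂(wMeas w)) := by
  set L := ENNReal.ofReal (d - c) with hL
  set X := ∫⁻ x in Set.Ioo c d, ENNReal.ofReal (f x ^ 2 * w x) with hX
  set Sg := ∫⁻ x in Set.Ioo c d, ENNReal.ofReal (w x)⁻¹ with hSg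
  set W := wMeas w (Set.Ioo c d) with hWdef
  have hL0 : L ≠ 0 := (ENNReal.ofReal_pos.mpr (by linarith)).ne'
  have hLt : L ≠ ∞ := ENNReal.ofReal_ne_top
  have hW0 : W ≠ 0 := wMeas_Ioo_ne_zero hw hcd
  have hWt : W ≠ ∞ := wMeas_Ioo_ne_top hw c d
  -- step 2 : X = ∫_I ofReal f² dμ
  have hXmu : (∫⁻ x in Set.Ioo c d, ENNReal.ofReal (f x ^ 2) ∂(wMeas w)) = X := by
    rw [hX]
    rw [show wMeas w = volume.withDensity (fun x => ENNReal.ofReal (w x)) from rfl]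
    rw [setLIntegral_withDensity_eq_setLIntegral_mul _
      hw.1.ennreal_ofReal ((hf.pow_const 2).ennreal_ofReal) measurableSet_Ioo]
    refine lintegral_congr fun x => ?_
    simp only [Pi.mul_apply]
    rw [← ENNReal.ofReal_mul (le_of_lt (hw.2.1 x)), mul_comm (w x) _]
  -- step 1 : Hölder
  have hCS : (∫⁻ x in Set.Ioo c d, ENNReal.ofReal |f x|) ≤
      X ^ (1/2:ℝ) * Sg ^ (1/2:ℝ) := by
    have hpt : ∀ x : ℝ, ENNReal.ofReal |f x| =
        ENNReal.ofReal (f x ^ 2 * w x) ^ (1/2 : ℝ) * ENNReal.ofReal ((w x)⁻¹) ^ (1/2 : ℝ) :=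
      fun x => ofReal_abs_decomp hw f x (hw.2.1 x)
    calc (∫⁻ x in Set.Ioo c d, ENNReal.ofReal |f x|)
        = ∫⁻ x in Set.Ioo c d,
            ENNReal.ofReal (f x ^ 2 * w x) ^ (1/2 : ℝ) *
            ENNReal.ofReal ((w x)⁻¹) ^ (1/2 : ℝ) := lintegral_congr fun x => hpt x
      _ ≤ X ^ (1/2:ℝ) * Sg ^ (1/2:ℝ) := by
          refine ENNReal.lintegral_mul_norm_pow_le ?_ ?_ (by norm_num) (by norm_num) (by norm_num)
          · exact (ENNReal.measurable_ofReal.comp ((hf.pow_const 2).mul hw.1)).aemeasurable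
          · exact (ENNReal.measurable_ofReal.comp (hw.1.inv)).aemeasurable
  -- step 3+4
  have havgsq : avgE f c d ^ 2 ≤ (L ^ 2)⁻¹ * (X * Sg) := by
    have h1 : avgE f c d ≤ L⁻¹ * (X ^ (1/2:ℝ) * Sg ^ (1/2:ℝ)) :=
      mul_le_mul_right hCS _
    calc avgE f c d ^ 2 ≤ (L⁻¹ * (X ^ (1/2:ℝ) * Sg ^ (1/2:ℝ))) ^ 2 := by
          rw [pow_two, pow_two]; exact mul_le_mul' h1 h1
      _ = (L ^ 2)⁻¹ * (X * Sg) := by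
          rw [mul_pow, mul_pow, sq_sqE, sq_sqE, ← ENNReal.inv_pow]
  refine havgsq.trans ?_
  -- (L²)⁻¹ * (X * Sg) ≤ A2 * (W⁻¹ * X)
  have hkey : W * Sg ≤ A2 w * L ^ 2 := key_prod hw hcd
  have hfrac : (L ^ 2)⁻¹ * Sg ≤ A2 w * W⁻¹ := by
    have h1 : ((L ^ 2)⁻¹ * Sg) * W ≤ A2 w := by
      calc ((L ^ 2)⁻¹ * Sg) * W = (L ^ 2)⁻¹ * (W * Sg) := by ring
        _ ≤ (L ^ 2)⁻¹ * (A2 w * L ^ 2) := mul_le_mul_right hkey _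
        _ = A2 w * ((L ^ 2)⁻¹ * L ^ 2) := by ring
        _ = A2 w := by
            rw [ENNReal.inv_mul_cancel (pow_ne_zero 2 hL0) (ENNReal.pow_ne_top hLt), mul_one]
    calc (L ^ 2)⁻¹ * Sg = (((L ^ 2)⁻¹ * Sg) * W) * W⁻¹ := by
          rw [mul_assoc, ENNReal.mul_inv_cancel hW0 hWt, mul_one]
      _ ≤ A2 w * W⁻¹ := mul_le_mul_left h1 _
  calc (L ^ 2)⁻¹ * (X * Sg) = ((L ^ 2)⁻¹ * Sg) * X := by ring
    _ ≤ (A2 w * W⁻¹) * X := mul_le_mul_left hfrac X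
    _ = A2 w * (W⁻¹ * X) := by ring
    _ = A2 w * (W⁻¹ * ∫⁻ x in Set.Ioo c d, ENNReal.ofReal (f x ^ 2) ∂(wMeas w)) := by
        rw [hXmu]
/-- Sparse subsets carry a proportional amount of the weighted mass. -/
lemma sparse_w {γ : ℝ} (hγ : 0 < γ) {a b : ℝ} (hab : a < b) {Ep : Set ℝ}
    (hmsE : MeasurableSet Ep) (hsub : Ep ⊆ Set.Ico a b)
    (hvol : ENNReal.ofReal (γ * (b - a)) ≤ volume Ep) :
    wMeas w (Set.Ioo a b) ≤ ((ENNReal.ofReal γ) ^ 2)⁻¹ * (A2 w * wMeas w Ep) := by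
  set G := ENNReal.ofReal γ with hG
  set L := ENNReal.ofReal (b - a) with hL
  set W := wMeas w (Set.Ioo a b) with hW
  set Sg := ∫⁻ x in Set.Ioo a b, ENNReal.ofReal (w x)⁻¹ with hSg
  have hG0 : G ≠ 0 := (ENNReal.ofReal_pos.mpr hγ).ne'
  have hGt : G ≠ ∞ := ENNReal.ofReal_ne_top
  have hL0 : L ≠ 0 := (ENNReal.ofReal_pos.mpr (by linarith)).ne'
  have hLt : L ≠ ∞ := ENNReal.ofReal_ne_top
  have hW0 : W ≠ 0 := wMeas_Ioo_ne_zero hw hab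
  have hWt : W ≠ ∞ := wMeas_Ioo_ne_top hw a b
  -- Cauchy–Schwarz : vol Ep ≤ μ(Ep)^½ Sg^½
  have hCS : volume Ep ≤ (wMeas w Ep) ^ (1/2:ℝ) * Sg ^ (1/2:ℝ) := by
    have hpt : ∀ x : ℝ, (1 : ℝ≥0∞) =
        ENNReal.ofReal (w x) ^ (1/2 : ℝ) * ENNReal.ofReal ((w x)⁻¹) ^ (1/2 : ℝ) := by
      intro x
      rw [← sqE_mul, ← ENNReal.ofReal_mul (le_of_lt (hw.2.1 x)),
        mul_inv_cancel₀ (hw.2.1 x).ne', ENNReal.ofReal_one, ENNReal.one_rpow]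
    have h1 : volume Ep = ∫⁻ x in Ep, (1 : ℝ≥0∞) := (setLIntegral_one Ep).symm
    rw [h1]
    calc (∫⁻ x in Ep, (1:ℝ≥0∞))
        = ∫⁻ x in Ep, ENNReal.ofReal (w x) ^ (1/2 : ℝ) *
            ENNReal.ofReal ((w x)⁻¹) ^ (1/2 : ℝ) := lintegral_congr fun x => hpt x
      _ ≤ (∫⁻ x in Ep, ENNReal.ofReal (w x)) ^ (1/2:ℝ) *
          (∫⁻ x in Ep, ENNReal.ofReal ((w x)⁻¹)) ^ (1/2:ℝ) :=
          ENNReal.lintegral_mul_norm_pow_le hw.1.ennreal_ofReal.aemeasurable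
            hw.1.inv.ennreal_ofReal.aemeasurable (by norm_num) (by norm_num) (by norm_num)
      _ ≤ (wMeas w Ep) ^ (1/2:ℝ) * Sg ^ (1/2:ℝ) := by
          refine mul_le_mul' ?_ ?_
          · rw [wMeas_apply hmsE]
          · refine sqE_mono ?_
            calc (∫⁻ x in Ep, ENNReal.ofReal ((w x)⁻¹))
                ≤ ∫⁻ x in Set.Ico a b, ENNReal.ofReal ((w x)⁻¹) := lintegral_mono_set hsub
              _ = Sg := setLIntegral_congr Ioo_ae_eq_Ico.symm
  -- (G·L)² ≤ μ(Ep)·Sg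
  have hsq : G ^ 2 * L ^ 2 ≤ wMeas w Ep * Sg := by
    have h0 : G * L ≤ volume Ep := by
      rw [hG, hL, ← ENNReal.ofReal_mul hγ.le]
      exact hvol
    have h1 : G * L ≤ (wMeas w Ep) ^ (1/2:ℝ) * Sg ^ (1/2:ℝ) := h0.trans hCS
    calc G ^ 2 * L ^ 2 = (G * L) ^ 2 := by ring
      _ ≤ ((wMeas w Ep) ^ (1/2:ℝ) * Sg ^ (1/2:ℝ)) ^ 2 := by
          rw [pow_two, pow_two]; exact mul_le_mul' h1 h1
      _ = wMeas w Ep * Sg := by rw [mul_pow, sq_sqE, sq_sqE]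
  -- multiply by W and use key_prod
  have hWS : W * Sg ≤ A2 w * L ^ 2 := key_prod hw hab
  have hmain : G ^ 2 * W * L ^ 2 ≤ A2 w * wMeas w Ep * L ^ 2 := by
    calc G ^ 2 * W * L ^ 2 = W * (G ^ 2 * L ^ 2) := by ring
      _ ≤ W * (wMeas w Ep * Sg) := mul_le_mul_right hsq _
      _ = wMeas w Ep * (W * Sg) := by ring
      _ ≤ wMeas w Ep * (A2 w * L ^ 2) := mul_le_mul_right hWS _
      _ = A2 w * wMeas w Ep * L ^ 2 := by ring
  have hGW : G ^ 2 * W ≤ A2 w * wMeas w Ep :=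
    (ENNReal.mul_le_mul_iff_left (pow_ne_zero 2 hL0) (ENNReal.pow_ne_top hLt)).mp hmain
  calc W = (G ^ 2)⁻¹ * (G ^ 2 * W) := by
        rw [← mul_assoc, ENNReal.inv_mul_cancel (pow_ne_zero 2 hG0) (ENNReal.pow_ne_top hGt),
          one_mul]
    _ ≤ (G ^ 2)⁻¹ * (A2 w * wMeas w Ep) := mul_le_mul_right hGW _
lemma Go_le {f : ℝ → ℝ} (hf : Measurable f) (x : ℝ) :
    Go f x ≤ (A2 w * Ho (wMeas w) (fun y => ENNReal.ofReal (f y ^ 2)) x) ^ (1/2:ℝ) := by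
  refine iSup_le fun c => iSup_le fun d => iSup_le fun hc => iSup_le fun hd => ?_
  have hcd : c < d := hc.trans hd
  calc avgE f c d = (avgE f c d ^ 2) ^ (1/2:ℝ) := (sqE_sq _).symm
    _ ≤ (A2 w * ((wMeas w (Set.Ioo c d))⁻¹ *
          ∫⁻ y in Set.Ioo c d, ENNReal.ofReal (f y ^ 2) ∂(wMeas w))) ^ (1/2:ℝ) :=
        sqE_mono (buckley_interval hw hf hcd)
    _ ≤ (A2 w * Ho (wMeas w) (fun y => ENNReal.ofReal (f y ^ 2)) x) ^ (1/2:ℝ) :=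
        sqE_mono (mul_le_mul_right (Ho_lower _ _ ⟨hc, hd⟩) _)

lemma weakG [IsLocallyFiniteMeasure (wMeas w)]
    (hA2t : A2 w ≠ ∞) (hA20 : A2 w ≠ 0) {f : ℝ → ℝ} (hf : Measurable f)
    (hXt : (∫⁻ y, ENNReal.ofReal (f y ^ 2) ∂(wMeas w)) ≠ ∞) :
    ∀ j : ℤ, ((2:ℝ≥0∞) ^ j) ^ 2 * (wMeas w) {x | (2:ℝ≥0∞) ^ j < Go f x} ≤
      4 * A2 w * ∫⁻ y, ENNReal.ofReal (f y ^ 2) ∂(wMeas w) := by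
  intro j
  set μ := wMeas w
  set X := ∫⁻ y, ENNReal.ofReal (f y ^ 2) ∂μ with hX
  set a : ℝ≥0∞ := (2:ℝ≥0∞) ^ j with haj
  have ha0 : a ≠ 0 := (ENNReal.zpow_pos (by norm_num) (by norm_num) j).ne'
  have hat : a ≠ ∞ := (ENNReal.zpow_lt_top (by norm_num) (by norm_num) j).ne
  have ha20 : a ^ 2 ≠ 0 := pow_ne_zero 2 ha0
  have ha2t : a ^ 2 ≠ ∞ := ENNReal.pow_ne_top hat
  have h2A0 : 2 * A2 w ≠ 0 := by simp [hA20]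
  have h2At : 2 * A2 w ≠ ∞ := ENNReal.mul_ne_top (by norm_num) hA2t
  set t' : ℝ≥0∞ := a ^ 2 / (2 * A2 w) with ht'
  have ht'0 : t' ≠ 0 := by
    rw [ht']
    simp [ENNReal.div_eq_zero_iff, ha20, h2At]
  have ht't : t' ≠ ∞ := by
    rw [ht']
    exact (ENNReal.div_lt_top ha2t h2A0).ne
  have hsub : {x | a < Go f x} ⊆
      {x | t' < Ho μ (fun y => ENNReal.ofReal (f y ^ 2)) x} := by
    intro x hx
    simp only [mem_setOf_eq] at hx ⊢
    have h1 : a < (A2 w * Ho μ (fun y => ENNReal.ofReal (f y ^ 2)) x) ^ (1/2:ℝ) :=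
      lt_of_lt_of_le hx (Go_le hw hf x)
    have h2 : a ^ 2 < A2 w * Ho μ (fun y => ENNReal.ofReal (f y ^ 2)) x := by
      have := (ENNReal.pow_lt_pow_left_iff (n := 2) (by norm_num)).mpr h1
      rwa [sq_sqE] at this
    rw [ht', ENNReal.div_lt_iff (Or.inl h2A0) (Or.inl h2At)]
    calc a ^ 2 < A2 w * Ho μ (fun y => ENNReal.ofReal (f y ^ 2)) x := h2
      _ ≤ Ho μ (fun y => ENNReal.ofReal (f y ^ 2)) x * (2 * A2 w) := by
          rw [mul_comm]
          exact mul_le_mul_right (by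
            conv_lhs => rw [← one_mul (A2 w)]
            exact mul_le_mul_left (by norm_num) _) _
  have hW := W11 μ (fun y => ENNReal.ofReal (f y ^ 2)) (hf.pow_const 2).ennreal_ofReal t'
  have hmu : μ {x | t' < Ho μ (fun y => ENNReal.ofReal (f y ^ 2)) x} ≤ t'⁻¹ * (2 * X) := by
    calc μ {x | t' < Ho μ (fun y => ENNReal.ofReal (f y ^ 2)) x}
        = t'⁻¹ * (t' * μ {x | t' < Ho μ (fun y => ENNReal.ofReal (f y ^ 2)) x}) := by
          rw [← mul_assoc, ENNReal.inv_mul_cancel ht'0 ht't, one_mul]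
      _ ≤ t'⁻¹ * (2 * X) := mul_le_mul_right hW _
  have hainv : a ^ 2 * t'⁻¹ = 2 * A2 w := by
    rw [ht', ENNReal.inv_div (Or.inr ha2t) (Or.inr ha20)]
    exact ENNReal.mul_div_cancel ha20 ha2t
  calc a ^ 2 * μ {x | a < Go f x}
      ≤ a ^ 2 * (t'⁻¹ * (2 * X)) :=
        mul_le_mul_right ((measure_mono hsub).trans hmu) _
    _ = (a ^ 2 * t'⁻¹) * (2 * X) := by ring
    _ = (2 * A2 w) * (2 * X) := by rw [hainv]
    _ = 4 * A2 w * X := by ring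

lemma A2_ne_zero : A2 w ≠ 0 := by
  intro h0
  have h := le_A2 (w := w) (a := 0) (b := 1) one_pos
  rw [h0, le_zero_iff] at h
  rcases mul_eq_zero.mp h with h1 | h1
  · have h2 : avgE w 0 1 =
        (ENNReal.ofReal (1 - 0))⁻¹ * ∫⁻ x in Set.Ioo 0 1, ENNReal.ofReal (w x) :=
      avgE_eq_of_pos hw.2.1 0 1
    rw [h2] at h1
    rcases mul_eq_zero.mp h1 with h3 | h3
    · simp at h3
    · have h4 := wMeas_Ioo_ne_zero hw (a := 0) (b := 1) one_pos
      rw [wMeas_apply measurableSet_Ioo] at h4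
      exact h4 h3
  · have h2 : avgE (fun x => (w x)⁻¹) 0 1 =
        (ENNReal.ofReal (1 - 0))⁻¹ * ∫⁻ x in Set.Ioo 0 1, ENNReal.ofReal ((w x)⁻¹) :=
      avgE_eq_of_pos (fun x => inv_pos.mpr (hw.2.1 x)) 0 1
    rw [h2] at h1
    rcases mul_eq_zero.mp h1 with h3 | h3
    · simp at h3
    · -- σ-integral over (0,1) cannot vanish
      have hmble : Measurable fun x => ENNReal.ofReal ((w x)⁻¹) :=
        hw.1.inv.ennreal_ofReal
      rw [setLIntegral_eq_zero_iff measurableSet_Ioo hmble] at h3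
      have h5 : ∀ᵐ x ∂(volume : Measure ℝ), x ∉ Set.Ioo (0:ℝ) 1 := by
        filter_upwards [h3] with x hx
        intro hmem
        have h6 := hx hmem
        rw [ENNReal.ofReal_eq_zero] at h6
        exact absurd h6 (not_le.mpr (inv_pos.mpr (hw.2.1 x)))
      have hvol : (volume : Measure ℝ) (Set.Ioo (0:ℝ) 1) = 0 := by
        rw [ae_iff] at h5
        have hset : Set.Ioo (0:ℝ) 1 = {x : ℝ | ¬ x ∉ Set.Ioo (0:ℝ) 1} := by
          ext x; simp
        rw [hset]
        exact h5
      rw [Real.volume_Ioo] at hvol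
      rw [ENNReal.ofReal_eq_zero] at hvol
      linarith
end Weight

end SparseAux

/-- Weighted weak-type bound for the strong-sparse operator:
`‖𝒜*_S f‖_{L^{2,∞}(w)} ≤ C · [w]_{A₂}^{3/2} · ‖f‖_{L²(w)}`. -/
theorem strong_sparse_weak_upper_bound :
    ∀ γ : ℝ, 0 < γ → γ < 1 →
    ∃ C : ℝ, 0 < C ∧
      ∀ S : Set (ℝ × ℝ), IsSparse γ S →
      ∀ w : ℝ → ℝ, IsWeight w → A2 w ≠ ⊤ →
      ∀ f : ℝ → ℝ, Measurable f → L2w f w ≠ ⊤ →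
        weakL2wE (sparseOpStar S f) w ≤ ENNReal.ofReal C * A2 w ^ (3/2 : ℝ) * L2w f w := by
  intro γ hγ0 hγ1
  refine ⟨96 / γ ^ 2, by positivity, ?_⟩
  intro S hS w hw hA2t f hf hfN
  obtain ⟨hScnt, hSiv, Efam, hEfam, hEdisj⟩ := hS
  haveI := hScnt.to_subtype
  set μ := wMeas w with hμdef
  haveI : IsLocallyFiniteMeasure μ := SparseAux.locFinite hw
  have hOpm : Measurable (sparseOpStar S f) := by
    apply Measurable.ennreal_tsum
    intro p
    exact measurable_const.indicator measurableSet_Ico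
  -- the L² mass
  have hXN : (∫⁻ y, ENNReal.ofReal (f y ^ 2) ∂μ) =
      ∫⁻ x, ENNReal.ofReal (f x ^ 2) * ENNReal.ofReal (w x) := by
    rw [hμdef, show wMeas w = volume.withDensity (fun x => ENNReal.ofReal (w x)) from rfl,
      lintegral_withDensity_eq_lintegral_mul _ hw.1.ennreal_ofReal
        (hf.pow_const 2).ennreal_ofReal]
    refine lintegral_congr fun x => ?_
    simp only [Pi.mul_apply]
    exact mul_comm _ _
  set X := ∫⁻ y, ENNReal.ofReal (f y ^ 2) ∂μ with hXdef
  have hNX : L2w f w = X ^ (1/2:ℝ) := by rw [L2w, ← hXN]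
  set N := L2w f w with hNdef
  have hXt : X ≠ ∞ := by
    intro h
    apply hfN
    rw [hNX, h, ENNReal.top_rpow_of_pos (by norm_num)]
  rcases eq_or_ne X 0 with hX0 | hX0
  · -- `f` vanishes a.e. and the operator is identically zero
    have hfae : ∀ᵐ x ∂(volume : Measure ℝ), ENNReal.ofReal |f x| = 0 := by
      have h1 : (∫⁻ x, ENNReal.ofReal (f x ^ 2) * ENNReal.ofReal (w x)) = 0 := by
        rw [← hXN]; exact hX0
      have h2 := (lintegral_eq_zero_iff
        ((hf.pow_const 2).ennreal_ofReal.mul hw.1.ennreal_ofReal)).mp h1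
      filter_upwards [h2] with x hx
      have hx := mul_eq_zero.mp (show ENNReal.ofReal (f x ^ 2) * ENNReal.ofReal (w x) = 0 from hx)
      rw [ENNReal.ofReal_eq_zero, ENNReal.ofReal_eq_zero] at hx
      rcases hx with h | h
      · have hfx : f x = 0 := by nlinarith [sq_nonneg (f x)]
        simp [hfx]
      · exact absurd h (not_le.mpr (hw.2.1 x))
    have havg : ∀ c d : ℝ, avgE f c d = 0 := by
      intro c d
      rw [avgE]
      have hz : (∫⁻ x in Set.Ioo c d, ENNReal.ofReal |f x|) = 0 := by
        rw [lintegral_congr_ae (ae_restrict_of_ae hfae)]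
        simp
      rw [hz, mul_zero]
    have hMB : ∀ a b : ℝ, MB f a b = 0 := by
      intro a b
      refine le_antisymm ?_ (zero_le)
      refine iSup_le fun c => iSup_le fun d => iSup_le fun _ => iSup_le fun _ =>
        iSup_le fun _ => ?_
      rw [havg]
    have hOp0 : ∀ x, sparseOpStar S f x = 0 := by
      intro x
      rw [sparseOpStar]
      convert tsum_zero with p
      rw [hMB]
      simp
    rw [weakL2wE]
    refine iSup_le fun lam => iSup_le fun hlam => ?_
    have hempty : {x | ENNReal.ofReal lam < sparseOpStar S f x} = ∅ := by
      ext x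
      simp [hOp0 x]
    rw [hempty, measure_empty, ENNReal.zero_rpow_of_pos (by norm_num), mul_zero]
    exact zero_le
  -- main case
  have hA20 : A2 w ≠ 0 := SparseAux.A2_ne_zero hw
  set κ : ℝ≥0∞ := ((ENNReal.ofReal γ) ^ 2)⁻¹ with hκdef
  set B : ℝ≥0∞ := 4 * A2 w * X with hBdef
  have hB0 : B ≠ 0 := by
    rw [hBdef]
    exact mul_ne_zero (mul_ne_zero (by norm_num) hA20) hX0
  have hBt : B ≠ ∞ := by
    rw [hBdef]
    exact ENNReal.mul_ne_top (ENNReal.mul_ne_top (by norm_num) hA2t) hXt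
  have hweakGo : ∀ j : ℤ, ((2:ℝ≥0∞) ^ j) ^ 2 * μ {x | (2:ℝ≥0∞) ^ j < SparseAux.Go f x} ≤ B :=
    SparseAux.weakG hw hA2t hA20 hf hXt
  set K : ℝ≥0∞ := ENNReal.ofReal (96 / γ ^ 2) * A2 w ^ (3/2:ℝ) * N with hKdef
  have hKeq : κ * A2 w * (48 * B ^ (1/2:ℝ)) = K := by
    have hB12 : B ^ (1/2:ℝ) = 2 * A2 w ^ (1/2:ℝ) * X ^ (1/2:ℝ) := by
      rw [hBdef, SparseAux.sqE_mul, SparseAux.sqE_mul,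
        show (4:ℝ≥0∞) = 2 ^ 2 by norm_num, SparseAux.sqE_sq]
    have h32 : A2 w * A2 w ^ (1/2:ℝ) = A2 w ^ (3/2:ℝ) := by
      rw [show (3/2:ℝ) = 1 + 1/2 by norm_num, ENNReal.rpow_add _ _ hA20 hA2t,
        ENNReal.rpow_one]
    have hofR : ENNReal.ofReal (96 / γ ^ 2) = 96 * κ := by
      rw [ENNReal.ofReal_div_of_pos (by positivity), ENNReal.ofReal_pow hγ0.le, hκdef,
        div_eq_mul_inv]
      norm_num
    calc κ * A2 w * (48 * B ^ (1/2:ℝ))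
        = κ * A2 w * (48 * (2 * A2 w ^ (1/2:ℝ) * X ^ (1/2:ℝ))) := by rw [hB12]
      _ = (96 * κ) * (A2 w * A2 w ^ (1/2:ℝ)) * X ^ (1/2:ℝ) := by ring
      _ = (96 * κ) * A2 w ^ (3/2:ℝ) * X ^ (1/2:ℝ) := by rw [h32]
      _ = K := by rw [hKdef, hofR, hNX]
  rw [weakL2wE]
  refine iSup_le fun lam => iSup_le fun hlam => ?_
  set lamE := ENNReal.ofReal lam with hlamEdef
  set Eset := {x | lamE < sparseOpStar S f x} with hEsetdef
  have hEsetm : MeasurableSet Eset := measurableSet_lt measurable_const hOpm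
  have hmain : ∀ n : ℕ, lamE ^ 2 * μ (Eset ∩ Set.Ioo (-(n:ℝ)-1) ((n:ℝ)+1)) ≤ K ^ 2 := by
    intro n
    set En := Eset ∩ Set.Ioo (-(n:ℝ)-1) ((n:ℝ)+1) with hEndef
    have hEnm : MeasurableSet En := hEsetm.inter measurableSet_Ioo
    have hEnt : μ En ≠ ∞ :=
      (lt_of_le_of_lt (measure_mono inter_subset_right)
        (SparseAux.wMeas_Ioo_ne_top hw _ _).lt_top).ne
    set indE : ℝ → ℝ≥0∞ := En.indicator (fun _ => 1) with hindE
    set Hn := SparseAux.Ho μ indE with hHnd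
    have hintE : ∫⁻ y, indE y ∂μ = μ En := by
      rw [hindE]; exact lintegral_indicator_one hEnm
    have hHweak : ∀ t : ℝ≥0∞, 0 < t → t * μ {x | t < Hn x} ≤ 2 * μ En := by
      intro t ht
      have h := SparseAux.W11 μ indE (measurable_const.indicator hEnm) t
      rwa [hintE] at h
    have hHn1 : ∀ x, Hn x ≤ 1 := by
      intro x
      rw [hHnd, SparseAux.Ho]
      refine iSup_le fun c => iSup_le fun d => iSup_le fun hc => iSup_le fun hd => ?_
      have hfin : μ (Set.Ioo c d) ≠ ∞ := SparseAux.wMeas_Ioo_ne_top hw c d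
      have hle : ∫⁻ y in Set.Ioo c d, indE y ∂μ ≤ μ (Set.Ioo c d) := by
        calc ∫⁻ y in Set.Ioo c d, indE y ∂μ ≤ ∫⁻ _ in Set.Ioo c d, 1 ∂μ := by
              refine setLIntegral_mono' measurableSet_Ioo fun y _ => ?_
              rw [hindE]
              by_cases hy : y ∈ En
              · simp [Set.indicator_of_mem hy]
              · simp [Set.indicator_of_notMem hy]
          _ = μ (Set.Ioo c d) := by rw [setLIntegral_const, one_mul]
      rcases eq_or_ne (μ (Set.Ioo c d)) 0 with h0 | h0
      · have hz : ∫⁻ y in Set.Ioo c d, indE y ∂μ = 0 :=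
          le_antisymm (h0 ▸ hle) (zero_le)
        rw [hz, mul_zero]
        exact zero_le_one
      · calc (μ (Set.Ioo c d))⁻¹ * ∫⁻ y in Set.Ioo c d, indE y ∂μ
            ≤ (μ (Set.Ioo c d))⁻¹ * μ (Set.Ioo c d) := mul_le_mul_right hle _
          _ = 1 := ENNReal.inv_mul_cancel h0 hfin
    have hpair : ∫⁻ x, SparseAux.Go f x * Hn x ∂μ ≤
        48 * B ^ (1/2:ℝ) * (μ En) ^ (1/2:ℝ) :=
      SparseAux.pairing μ (SparseAux.Go f) Hn (SparseAux.measurable_Go f)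
        (fun s => (SparseAux.isOpen_Go_gt f s).measurableSet)
        (fun t => (SparseAux.isOpen_Ho_gt μ indE t).measurableSet)
        hB0 hBt hweakGo hEnt hHn1 hHweak
    -- step A+B
    have hAB : lamE * μ En ≤
        ∑' p : ↥S, MB f (p : ℝ × ℝ).1 (p : ℝ × ℝ).2 *
          μ (Set.Ico (p : ℝ × ℝ).1 (p : ℝ × ℝ).2 ∩ En) := by
      calc lamE * μ En = ∫⁻ _ in En, lamE ∂μ := by rw [setLIntegral_const]
        _ ≤ ∫⁻ x in En, sparseOpStar S f x ∂μ :=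
            setLIntegral_mono hOpm fun x hx => (le_of_lt hx.1)
        _ = ∑' p : ↥S, ∫⁻ x in En,
              (Set.Ico (p : ℝ × ℝ).1 (p : ℝ × ℝ).2).indicator
                (fun _ => MB f (p : ℝ × ℝ).1 (p : ℝ × ℝ).2) x ∂μ := by
            rw [show (fun x => sparseOpStar S f x) = fun x => ∑' p : ↥S,
              (Set.Ico (p : ℝ × ℝ).1 (p : ℝ × ℝ).2).indicator
                (fun _ => MB f (p : ℝ × ℝ).1 (p : ℝ × ℝ).2) x from rfl]
            exact lintegral_tsum fun p =>
              (measurable_const.indicator measurableSet_Ico).aemeasurable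
        _ = ∑' p : ↥S, MB f (p : ℝ × ℝ).1 (p : ℝ × ℝ).2 *
              μ (Set.Ico (p : ℝ × ℝ).1 (p : ℝ × ℝ).2 ∩ En) := by
            refine tsum_congr fun p => ?_
            rw [lintegral_indicator measurableSet_Ico, setLIntegral_const,
              Measure.restrict_apply measurableSet_Ico]
    -- step C
    have hC : ∀ p : ↥S, MB f (p : ℝ × ℝ).1 (p : ℝ × ℝ).2 *
          μ (Set.Ico (p : ℝ × ℝ).1 (p : ℝ × ℝ).2 ∩ En) ≤
        (κ * A2 w) * ∫⁻ x in Efam ↑p \ {(p : ℝ × ℝ).1},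
          SparseAux.Go f x * Hn x ∂μ := by
      intro p
      have hpS : (p : ℝ × ℝ) ∈ S := p.2
      obtain ⟨hEm, hEsub, hEvol⟩ := hEfam _ hpS
      have hab : (p : ℝ × ℝ).1 < (p : ℝ × ℝ).2 := hSiv _ hpS
      set a := (p : ℝ × ℝ).1 with hadef
      set b := (p : ℝ × ℝ).2 with hbdef
      set E' := Efam ↑p \ {a} with hE'def
      have hE'm : MeasurableSet E' := hEm.diff (measurableSet_singleton _)
      have hE'sub : E' ⊆ Set.Ioo a b := by
        intro x hx
        have h1 := hEsub hx.1
        have h2 : x ≠ a := hx.2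
        exact ⟨lt_of_le_of_ne h1.1 (Ne.symm h2), h1.2⟩
      have hμE'ge : μ (Efam ↑p) ≤ μ E' := by
        calc μ (Efam ↑p) ≤ μ (E' ∪ {a}) := measure_mono (by
              intro x hx
              by_cases hxa : x = a
              · exact Or.inr (by simpa using hxa)
              · exact Or.inl ⟨hx, hxa⟩)
          _ ≤ μ E' + μ {a} := measure_union_le _ _
          _ = μ E' := by rw [SparseAux.wMeas_singleton, add_zero]
      have hIoo0 : μ (Set.Ioo a b) ≠ 0 := SparseAux.wMeas_Ioo_ne_zero hw hab
      have hIoot : μ (Set.Ioo a b) ≠ ∞ := SparseAux.wMeas_Ioo_ne_top hw a b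
      have hsp : μ (Set.Ioo a b) ≤ (κ * A2 w) * μ E' := by
        calc μ (Set.Ioo a b) ≤ κ * (A2 w * μ (Efam ↑p)) :=
              SparseAux.sparse_w hw hγ0 hab hEm hEsub hEvol
          _ ≤ κ * (A2 w * μ E') := mul_le_mul_right (mul_le_mul_right hμE'ge _) _
          _ = (κ * A2 w) * μ E' := by ring
      have hE't : μ E' ≠ ∞ :=
        (lt_of_le_of_lt (measure_mono hE'sub) hIoot.lt_top).ne
      have hE'0 : μ E' ≠ 0 := by
        intro h0
        rw [h0, mul_zero] at hsp
        exact hIoo0 (le_antisymm hsp (zero_le))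
      have hImeas : μ (Set.Ico a b ∩ En) ≤ μ (Set.Ioo a b ∩ En) := by
        calc μ (Set.Ico a b ∩ En) ≤ μ ((Set.Ioo a b ∩ En) ∪ {a}) := measure_mono (by
              rintro x ⟨hx1, hx2⟩
              by_cases hxa : x = a
              · exact Or.inr (by simpa using hxa)
              · exact Or.inl ⟨⟨lt_of_le_of_ne hx1.1 (Ne.symm hxa), hx1.2⟩, hx2⟩)
          _ ≤ μ (Set.Ioo a b ∩ En) + μ {a} := measure_union_le _ _
          _ = μ (Set.Ioo a b ∩ En) := by rw [SparseAux.wMeas_singleton, add_zero]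
      have hintIoo : ∫⁻ y in Set.Ioo a b, indE y ∂μ = μ (Set.Ioo a b ∩ En) := by
        rw [hindE, lintegral_indicator hEnm, setLIntegral_one,
          Measure.restrict_apply hEnm, Set.inter_comm]
      have hpt : ∀ x ∈ E', MB f a b * μ (Set.Ico a b ∩ En) ≤
          (SparseAux.Go f x * Hn x) * μ (Set.Ioo a b) := by
        intro x hx
        have hxIoo := hE'sub hx
        have h1 : MB f a b ≤ SparseAux.Go f x := SparseAux.MB_le_Go f hxIoo
        have h2 : μ (Set.Ico a b ∩ En) ≤ Hn x * μ (Set.Ioo a b) := by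
          calc μ (Set.Ico a b ∩ En) ≤ μ (Set.Ioo a b ∩ En) := hImeas
            _ = ((μ (Set.Ioo a b))⁻¹ * ∫⁻ y in Set.Ioo a b, indE y ∂μ) *
                  μ (Set.Ioo a b) := by
                rw [hintIoo, mul_comm ((μ (Set.Ioo a b))⁻¹) _, mul_assoc,
                  ENNReal.inv_mul_cancel hIoo0 hIoot, mul_one]
            _ ≤ Hn x * μ (Set.Ioo a b) :=
                mul_le_mul_left (SparseAux.Ho_lower μ indE hxIoo) _
        calc MB f a b * μ (Set.Ico a b ∩ En)
            ≤ SparseAux.Go f x * (Hn x * μ (Set.Ioo a b)) := mul_le_mul' h1 h2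
          _ = (SparseAux.Go f x * Hn x) * μ (Set.Ioo a b) := by ring
      have hI1 : MB f a b * μ (Set.Ico a b ∩ En) * μ E' ≤
          (∫⁻ x in E', SparseAux.Go f x * Hn x ∂μ) * μ (Set.Ioo a b) := by
        calc MB f a b * μ (Set.Ico a b ∩ En) * μ E'
            = ∫⁻ _ in E', MB f a b * μ (Set.Ico a b ∩ En) ∂μ := by
              rw [setLIntegral_const]
          _ ≤ ∫⁻ x in E', (SparseAux.Go f x * Hn x) * μ (Set.Ioo a b) ∂μ :=
              setLIntegral_mono' hE'm hpt
          _ = (∫⁻ x in E', SparseAux.Go f x * Hn x ∂μ) * μ (Set.Ioo a b) :=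
              lintegral_mul_const _
                ((SparseAux.measurable_Go f).mul (SparseAux.measurable_Ho μ indE))
      refine (ENNReal.mul_le_mul_iff_left hE'0 hE't).mp ?_
      calc MB f a b * μ (Set.Ico a b ∩ En) * μ E'
          ≤ (∫⁻ x in E', SparseAux.Go f x * Hn x ∂μ) * μ (Set.Ioo a b) := hI1
        _ ≤ (∫⁻ x in E', SparseAux.Go f x * Hn x ∂μ) * ((κ * A2 w) * μ E') :=
            mul_le_mul_right hsp _
        _ = ((κ * A2 w) * ∫⁻ x in E', SparseAux.Go f x * Hn x ∂μ) * μ E' := by ring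
    -- step D + pairing
    have hdisj' : Pairwise (Function.onFun Disjoint
        (fun p : ↥S => Efam ↑p \ {(p : ℝ × ℝ).1})) := by
      intro p q hpq
      have hne : (p : ℝ × ℝ) ≠ (q : ℝ × ℝ) := fun h => hpq (Subtype.ext h)
      exact (hEdisj p.2 q.2 hne).mono Set.diff_subset Set.diff_subset
    have hstep : lamE * μ En ≤ K * (μ En) ^ (1/2:ℝ) := by
      calc lamE * μ En
          ≤ ∑' p : ↥S, MB f (p : ℝ × ℝ).1 (p : ℝ × ℝ).2 *
              μ (Set.Ico (p : ℝ × ℝ).1 (p : ℝ × ℝ).2 ∩ En) := hAB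
        _ ≤ ∑' p : ↥S, (κ * A2 w) * ∫⁻ x in Efam ↑p \ {(p : ℝ × ℝ).1},
              SparseAux.Go f x * Hn x ∂μ := ENNReal.tsum_le_tsum hC
        _ = (κ * A2 w) * ∑' p : ↥S, ∫⁻ x in Efam ↑p \ {(p : ℝ × ℝ).1},
              SparseAux.Go f x * Hn x ∂μ := ENNReal.tsum_mul_left
        _ ≤ (κ * A2 w) * ∫⁻ x, SparseAux.Go f x * Hn x ∂μ := by
            refine mul_le_mul_right ?_ _
            rw [← lintegral_iUnion
              (fun p : ↥S => ((hEfam _ p.2).1.diff (measurableSet_singleton _))) hdisj' _]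
            exact setLIntegral_le_lintegral _ _
        _ ≤ (κ * A2 w) * (48 * B ^ (1/2:ℝ) * (μ En) ^ (1/2:ℝ)) :=
            mul_le_mul_right hpair _
        _ = (κ * A2 w * (48 * B ^ (1/2:ℝ))) * (μ En) ^ (1/2:ℝ) := by ring
        _ = K * (μ En) ^ (1/2:ℝ) := by rw [hKeq]
    rcases eq_or_ne (μ En) 0 with h0 | h0
    · rw [h0, mul_zero]; exact zero_le
    · have h2 : (lamE ^ 2 * μ En) * μ En ≤ K ^ 2 * μ En := by
        calc (lamE ^ 2 * μ En) * μ En = (lamE * μ En) * (lamE * μ En) := by ring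
          _ ≤ (K * (μ En) ^ (1/2:ℝ)) * (K * (μ En) ^ (1/2:ℝ)) := mul_le_mul' hstep hstep
          _ = K ^ 2 * ((μ En) ^ (1/2:ℝ)) ^ 2 := by ring
          _ = K ^ 2 * μ En := by rw [SparseAux.sq_sqE]
      exact (ENNReal.mul_le_mul_iff_left h0 hEnt).mp h2
  have hcup : Eset = ⋃ n : ℕ, (Eset ∩ Set.Ioo (-(n:ℝ)-1) ((n:ℝ)+1)) := by
    ext x
    simp only [Set.mem_iUnion, Set.mem_inter_iff, Set.mem_Ioo]
    constructor
    · intro hx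
      obtain ⟨n, hn⟩ := exists_nat_gt |x|
      obtain ⟨h1, h2⟩ := abs_lt.mp hn
      exact ⟨n, hx, by linarith, by linarith⟩
    · rintro ⟨n, hx, -⟩
      exact hx
  have hdir : Directed (· ⊆ ·) (fun n : ℕ => Eset ∩ Set.Ioo (-(n:ℝ)-1) ((n:ℝ)+1)) := by
    apply Monotone.directed_le
    intro m n hmn
    refine Set.inter_subset_inter_right _ (Set.Ioo_subset_Ioo ?_ ?_)
    · have : (m:ℝ) ≤ (n:ℝ) := Nat.cast_le.mpr hmn
      linarith
    · have : (m:ℝ) ≤ (n:ℝ) := Nat.cast_le.mpr hmn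
      linarith
  have hμE : μ Eset = ⨆ n : ℕ, μ (Eset ∩ Set.Ioo (-(n:ℝ)-1) ((n:ℝ)+1)) := by
    conv_lhs => rw [hcup]
    exact hdir.measure_iUnion
  have hfin2 : lamE ^ 2 * μ Eset ≤ K ^ 2 := by
    rw [hμE, ENNReal.mul_iSup]
    exact iSup_le hmain
  calc lamE * (μ Eset) ^ (1/2:ℝ) = (lamE ^ 2 * μ Eset) ^ (1/2:ℝ) := by
        rw [SparseAux.sqE_mul, SparseAux.sqE_sq]
    _ ≤ (K ^ 2) ^ (1/2:ℝ) := SparseAux.sqE_mono hfin2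
    _ = K := SparseAux.sqE_sq K
end
end

section
/- There exists an absolute constant c > 0 such that for every α ∈ (0,1) the following holds. Let w(x) := |x|^{α−1}, σ(x) := |x|^{1−α}, and S := {[0, 2^{−k}) : k ∈ ℕ, k ≥ 1} (this family is 1/2-sparse). Then ‖𝒜*_S(σ·1_{[0,1)})‖_{L^{2,∞}(w)} ≥ c · α^{−3/2} · ‖σ·1_{[0,1)}‖_{L²(w)}. -/
open MeasureTheory Set Filter
open scoped ENNReal NNReal

noncomputable section

section Aux

lemma aux_dyadic_le {k n : ℕ} (h : k + 1 ≤ n) :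
    (2:ℝ) ^ (-(n:ℤ)) ≤ (2:ℝ) ^ (-((k+1:ℕ):ℤ)) :=
  zpow_le_zpow_right₀ one_le_two (by omega)

lemma aux_dyadic_pos (m : ℤ) : (0:ℝ) < (2:ℝ) ^ m := zpow_pos (by norm_num) m

lemma aux_sparse :
    IsSparse (1/2) {p : ℝ × ℝ | ∃ k : ℕ, 1 ≤ k ∧ p = (0, (2 : ℝ) ^ (-(k : ℤ)))} := by
  have key : ∀ k j : ℕ, k < j →
      Disjoint (Set.Ico ((2:ℝ)^(-(k:ℤ))/2) ((2:ℝ)^(-(k:ℤ))))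
        (Set.Ico ((2:ℝ)^(-(j:ℤ))/2) ((2:ℝ)^(-(j:ℤ)))) := by
    intro k j hkj
    have h1 : (2:ℝ) ^ (-(j:ℤ)) ≤ (2:ℝ) ^ (-(k:ℤ) - 1) :=
      zpow_le_zpow_right₀ one_le_two (by omega)
    rw [zpow_sub₀ (two_ne_zero), zpow_one] at h1
    rw [Set.disjoint_left]
    rintro a ⟨ha1, -⟩ ⟨-, hb2⟩
    linarith
  refine ⟨?_, ?_, fun p => Set.Ico (p.2/2) p.2, ?_, ?_⟩
  · apply Set.Countable.mono _
      (Set.countable_range fun k : ℕ => ((0:ℝ), (2:ℝ)^(-(k:ℤ))))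
    rintro p ⟨k, -, rfl⟩; exact ⟨k, rfl⟩
  · rintro p ⟨k, -, rfl⟩
    exact aux_dyadic_pos _
  · rintro p ⟨k, -, rfl⟩
    refine ⟨measurableSet_Ico, ?_, ?_⟩
    · exact Set.Ico_subset_Ico (le_of_lt (by positivity)) le_rfl
    · rw [Real.volume_Ico]
      apply ENNReal.ofReal_le_ofReal
      simp only
      ring_nf
      linarith
  · rintro p ⟨k, -, rfl⟩ q ⟨j, -, rfl⟩ hne
    have hkj : k ≠ j := by
      rintro rfl; exact hne rfl
    simp only [Function.onFun]
    rcases lt_or_gt_of_ne hkj with h | h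
    · exact key k j h
    · exact (key j k h).symm

lemma aux_f_meas {α : ℝ} (hα1 : α < 1) :
    Measurable ((Set.Ico (0:ℝ) 1).indicator fun x => |x| ^ (1 - α)) :=
  (((Real.continuous_rpow_const (by linarith)).comp continuous_abs).measurable).indicator
    measurableSet_Ico

lemma aux_avg {α : ℝ} (hα : 0 < α) (hα1 : α < 1) :
    ENNReal.ofReal (1/4) ≤
      avgE ((Set.Ico (0:ℝ) 1).indicator fun x => |x| ^ (1 - α)) 0 1 := by
  set f := (Set.Ico (0:ℝ) 1).indicator fun x => |x| ^ (1 - α) with hf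
  have h1 : avgE f 0 1 = ∫⁻ x in Set.Ioo (0:ℝ) 1, ENNReal.ofReal |f x| := by
    rw [avgE]
    norm_num
  rw [h1]
  have h2 : ∫⁻ x in Set.Ioo (1/2 : ℝ) 1, ENNReal.ofReal |f x| ≤
      ∫⁻ x in Set.Ioo (0:ℝ) 1, ENNReal.ofReal |f x| := by
    apply lintegral_mono_set
    apply Set.Ioo_subset_Ioo (by norm_num) le_rfl
  refine le_trans ?_ h2
  have h3 : ∫⁻ _ in Set.Ioo (1/2 : ℝ) 1, (ENNReal.ofReal (1/2) : ℝ≥0∞) ≤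
      ∫⁻ x in Set.Ioo (1/2 : ℝ) 1, ENNReal.ofReal |f x| := by
    apply setLIntegral_mono ((aux_f_meas hα1).abs.ennreal_ofReal)
    intro x hx
    apply ENNReal.ofReal_le_ofReal
    have hx0 : (0:ℝ) < x := by linarith [hx.1]
    have hx1 : x < 1 := hx.2
    have hmem : x ∈ Set.Ico (0:ℝ) 1 := ⟨hx0.le, hx1⟩
    rw [Set.indicator_of_mem hmem, abs_of_nonneg (Real.rpow_nonneg (abs_nonneg x) _),
      abs_of_pos hx0]
    calc (1/2 : ℝ) ≤ x := by linarith [hx.1]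
    _ = x ^ (1:ℝ) := (Real.rpow_one x).symm
    _ ≤ x ^ (1 - α) := Real.rpow_le_rpow_of_exponent_ge hx0 hx1.le (by linarith)
  refine le_trans ?_ h3
  rw [setLIntegral_const, Real.volume_Ioo, ← ENNReal.ofReal_mul (by norm_num)]
  apply ENNReal.ofReal_le_ofReal
  norm_num

lemma aux_MB {α : ℝ} (hα : 0 < α) (hα1 : α < 1) {b : ℝ} (hb : b ≤ 1) :
    ENNReal.ofReal (1/4) ≤
      MB ((Set.Ico (0:ℝ) 1).indicator fun x => |x| ^ (1 - α)) 0 b := by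
  refine le_trans (aux_avg hα hα1) ?_
  rw [MB]
  exact le_iSup_of_le 0 (le_iSup_of_le 1 (le_iSup_of_le le_rfl
    (le_iSup_of_le hb (le_iSup_of_le one_pos le_rfl))))

lemma aux_op {α : ℝ} (hα : 0 < α) (hα1 : α < 1) (n : ℕ) {x : ℝ}
    (hx : x ∈ Set.Ico 0 ((2:ℝ) ^ (-(n:ℤ)))) :
    ENNReal.ofReal (n/4) ≤
      sparseOpStar {p : ℝ × ℝ | ∃ k : ℕ, 1 ≤ k ∧ p = (0, (2 : ℝ) ^ (-(k : ℤ)))}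
        ((Set.Ico (0:ℝ) 1).indicator fun x => |x| ^ (1 - α)) x := by
  set S := {p : ℝ × ℝ | ∃ k : ℕ, 1 ≤ k ∧ p = (0, (2 : ℝ) ^ (-(k : ℤ)))} with hS
  set f := (Set.Ico (0:ℝ) 1).indicator fun x => |x| ^ (1 - α) with hf
  have hmem : ∀ k : ℕ, ((0:ℝ), (2:ℝ)^(-((k+1:ℕ):ℤ))) ∈ S := fun k => ⟨k+1, by omega, rfl⟩
  set e : ℕ → S := fun k => ⟨((0:ℝ), (2:ℝ)^(-((k+1:ℕ):ℤ))), hmem k⟩ with he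
  have hinj : Function.Injective e := by
    intro k k' h
    have h2 : (2:ℝ)^(-((k+1:ℕ):ℤ)) = (2:ℝ)^(-((k'+1:ℕ):ℤ)) :=
      congrArg (fun p : S => (p : ℝ × ℝ).2) h
    have := zpow_right_injective₀ (by norm_num : (0:ℝ) < 2) (by norm_num) h2
    omega
  calc ENNReal.ofReal (n/4)
      ≤ ∑ k ∈ Finset.range n,
          (Set.Ico ((e k : ℝ × ℝ)).1 ((e k : ℝ × ℝ)).2).indicator
            (fun _ => MB f ((e k : ℝ × ℝ)).1 ((e k : ℝ × ℝ)).2) x := by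
        have hterm : ∀ k ∈ Finset.range n, ENNReal.ofReal (1/4) ≤
            (Set.Ico ((e k : ℝ × ℝ)).1 ((e k : ℝ × ℝ)).2).indicator
              (fun _ => MB f ((e k : ℝ × ℝ)).1 ((e k : ℝ × ℝ)).2) x := by
          intro k hk
          rw [Finset.mem_range] at hk
          have hxk : x ∈ Set.Ico (0:ℝ) ((2:ℝ)^(-((k+1:ℕ):ℤ))) :=
            ⟨hx.1, lt_of_lt_of_le hx.2 (aux_dyadic_le (by omega))⟩
          have hb1 : (2:ℝ)^(-((k+1:ℕ):ℤ)) ≤ 1 :=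
            zpow_le_one_of_nonpos₀ one_le_two (by omega)
          simp only [he]
          rw [Set.indicator_of_mem hxk]
          exact aux_MB hα hα1 hb1
        calc ENNReal.ofReal (n/4)
            = ∑ _k ∈ Finset.range n, ENNReal.ofReal (1/4) := by
              rw [Finset.sum_const, Finset.card_range, nsmul_eq_mul,
                ← ENNReal.ofReal_natCast n, ← ENNReal.ofReal_mul (by positivity)]
              congr 1
              ring
          _ ≤ _ := Finset.sum_le_sum hterm
    _ ≤ ∑' k : ℕ,
          (Set.Ico ((e k : ℝ × ℝ)).1 ((e k : ℝ × ℝ)).2).indicator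
            (fun _ => MB f ((e k : ℝ × ℝ)).1 ((e k : ℝ × ℝ)).2) x :=
        ENNReal.sum_le_tsum _
    _ ≤ sparseOpStar S f x :=
        ENNReal.tsum_comp_le_tsum_of_injective hinj
          (fun p : S => (Set.Ico ((p : ℝ × ℝ)).1 ((p : ℝ × ℝ)).2).indicator
            (fun _ => MB f ((p : ℝ × ℝ)).1 ((p : ℝ × ℝ)).2) x)

lemma aux_w {α : ℝ} (hα : 0 < α) {t : ℝ} (ht : 0 < t) :
    ENNReal.ofReal (t ^ α / α) ≤ wMeas (fun x => |x| ^ (α - 1)) (Set.Ico 0 t) := by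
  have hint : MeasureTheory.IntegrableOn (fun x : ℝ => x ^ (α - 1)) (Set.Ioo 0 t) :=
    ((intervalIntegral.intervalIntegrable_rpow' (by linarith)).1).mono_set Set.Ioo_subset_Ioc_self
  have hval : ∫ x in Set.Ioo (0:ℝ) t, x ^ (α - 1) = t ^ α / α := by
    rw [← MeasureTheory.integral_Ioc_eq_integral_Ioo,
      ← intervalIntegral.integral_of_le ht.le,
      integral_rpow (Or.inl (by linarith : (-1:ℝ) < α - 1))]
    rw [Real.zero_rpow (by linarith : α - 1 + 1 ≠ 0)]
    ring_nf
  have hlift : ∫⁻ x in Set.Ioo (0:ℝ) t, ENNReal.ofReal (x ^ (α - 1)) =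
      ENNReal.ofReal (t ^ α / α) := by
    rw [← hval]
    refine (MeasureTheory.ofReal_integral_eq_lintegral_ofReal hint ?_).symm
    exact (MeasureTheory.ae_restrict_iff' measurableSet_Ioo).2
      (Filter.Eventually.of_forall fun x hx => Real.rpow_nonneg hx.1.le _)
  rw [wMeas, MeasureTheory.withDensity_apply _ measurableSet_Ico]
  calc ENNReal.ofReal (t ^ α / α)
      = ∫⁻ x in Set.Ioo (0:ℝ) t, ENNReal.ofReal (x ^ (α - 1)) := hlift.symm
    _ = ∫⁻ x in Set.Ioo (0:ℝ) t, ENNReal.ofReal (|x| ^ (α - 1)) := by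
        apply MeasureTheory.setLIntegral_congr_fun measurableSet_Ioo
        exact fun x hx => by simp only [abs_of_pos hx.1]
    _ ≤ ∫⁻ x in Set.Ico (0:ℝ) t, ENNReal.ofReal (|x| ^ (α - 1)) :=
        lintegral_mono_set Set.Ioo_subset_Ico_self

lemma aux_L2w {α : ℝ} (hα : 0 < α) (hα1 : α < 1) :
    L2w ((Set.Ico (0:ℝ) 1).indicator fun x => |x| ^ (1 - α))
      (fun x => |x| ^ (α - 1)) ≤ 1 := by
  set f := (Set.Ico (0:ℝ) 1).indicator fun x => |x| ^ (1 - α) with hf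
  have hpt : ∀ x : ℝ, ENNReal.ofReal (f x ^ 2) * ENNReal.ofReal (|x| ^ (α - 1)) ≤
      (Set.Ico (0:ℝ) 1).indicator (fun _ => (1:ℝ≥0∞)) x := by
    intro x
    by_cases hx : x ∈ Set.Ico (0:ℝ) 1
    · rw [Set.indicator_of_mem hx]
      rcases eq_or_lt_of_le hx.1 with heq | hpos
      · have : f x = 0 := by
          rw [hf, Set.indicator_of_mem hx, ← heq, abs_zero,
            Real.zero_rpow (by linarith : (1:ℝ) - α ≠ 0)]
        rw [this]
        norm_num
      · have hfx : f x = x ^ (1 - α) := by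
          rw [hf, Set.indicator_of_mem hx, abs_of_pos hpos]
        rw [hfx, abs_of_pos hpos, ← ENNReal.ofReal_mul (by positivity)]
        have hxx : (x ^ (1 - α)) ^ 2 * x ^ (α - 1) = x ^ (1 - α) := by
          rw [← Real.rpow_natCast (x ^ (1 - α)) 2, ← Real.rpow_mul hpos.le,
            ← Real.rpow_add hpos]
          congr 1
          ring
        rw [hxx]
        calc ENNReal.ofReal (x ^ (1 - α)) ≤ ENNReal.ofReal 1 :=
              ENNReal.ofReal_le_ofReal
                (Real.rpow_le_one hpos.le hx.2.le (by linarith))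
          _ = 1 := ENNReal.ofReal_one
    · rw [Set.indicator_of_notMem hx]
      have : f x = 0 := by rw [hf, Set.indicator_of_notMem hx]
      rw [this]
      norm_num
  rw [L2w]
  have hle : ∫⁻ x, ENNReal.ofReal (f x ^ 2) * ENNReal.ofReal (|x| ^ (α - 1)) ≤ 1 := by
    calc ∫⁻ x, ENNReal.ofReal (f x ^ 2) * ENNReal.ofReal (|x| ^ (α - 1))
        ≤ ∫⁻ x, (Set.Ico (0:ℝ) 1).indicator (fun _ => (1:ℝ≥0∞)) x :=
          MeasureTheory.lintegral_mono hpt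
      _ = 1 := by
          rw [MeasureTheory.lintegral_indicator measurableSet_Ico,
            MeasureTheory.setLIntegral_one, Real.volume_Ico]
          norm_num
  calc (∫⁻ x, ENNReal.ofReal (f x ^ 2) * ENNReal.ofReal (|x| ^ (α - 1))) ^ (1/2:ℝ)
      ≤ (1:ℝ≥0∞) ^ (1/2:ℝ) := ENNReal.rpow_le_rpow hle (by norm_num)
    _ = 1 := ENNReal.one_rpow _

end Aux

/-- Lower bound realizing the exponent `3/2` in the weighted weak-type estimate: for the power
weights `w = |x|^{α-1}`, `σ = |x|^{1-α}` and the (1/2-sparse) family `S = {[0, 2^{-k}) : k ≥ 1}`,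
one has `‖𝒜*_S(σ·1_{[0,1)})‖_{L^{2,∞}(w)} ≥ c·α^{-3/2}·‖σ·1_{[0,1)}‖_{L²(w)}`. -/
theorem strong_sparse_weak_lower_bound :
    ∃ c : ℝ, 0 < c ∧
      ∀ α : ℝ, 0 < α → α < 1 →
        IsSparse (1/2) {p : ℝ × ℝ | ∃ k : ℕ, 1 ≤ k ∧ p = (0, (2 : ℝ) ^ (-(k : ℤ)))} ∧
        ENNReal.ofReal (c * α ^ (-(3/2) : ℝ)) *
            L2w ((Set.Ico (0 : ℝ) 1).indicator fun x => |x| ^ (1 - α))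
              (fun x => |x| ^ (α - 1)) ≤
          weakL2wE
            (sparseOpStar {p : ℝ × ℝ | ∃ k : ℕ, 1 ≤ k ∧ p = (0, (2 : ℝ) ^ (-(k : ℤ)))}
              ((Set.Ico (0 : ℝ) 1).indicator fun x => |x| ^ (1 - α)))
            (fun x => |x| ^ (α - 1)) := by
  refine ⟨1/16, by norm_num, fun α hα hα1 => ⟨aux_sparse, ?_⟩⟩
  set S := {p : ℝ × ℝ | ∃ k : ℕ, 1 ≤ k ∧ p = (0, (2 : ℝ) ^ (-(k : ℤ)))} with hS
  set f := (Set.Ico (0:ℝ) 1).indicator fun x => |x| ^ (1 - α) with hf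
  set w : ℝ → ℝ := fun x => |x| ^ (α - 1) with hw
  set n : ℕ := ⌈α⁻¹⌉₊ with hn
  set t : ℝ := (2:ℝ) ^ (-(n:ℤ)) with htdef
  have hβ : (1:ℝ) < α⁻¹ := one_lt_inv_iff₀.2 ⟨hα, hα1⟩
  have hn_ge : α⁻¹ ≤ (n:ℝ) := Nat.le_ceil _
  have hn1 : (1:ℝ) ≤ (n:ℝ) := le_trans hβ.le hn_ge
  have hn_le : (n:ℝ) ≤ α⁻¹ + 1 := (Nat.ceil_lt_add_one (by positivity)).le
  have ht : 0 < t := aux_dyadic_pos _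
  -- the key real inequality
  have htα : t ^ α = (2:ℝ) ^ (-(n:ℝ) * α) := by
    rw [htdef, ← Real.rpow_intCast 2 (-(n:ℤ)), ← Real.rpow_mul (by norm_num)]
    push_cast
    ring_nf
  have hinv : α⁻¹ * α = 1 := inv_mul_cancel₀ hα.ne'
  have hexp : (-2:ℝ) ≤ -(n:ℝ) * α := by nlinarith
  have h2m2 : (2:ℝ) ^ (-2:ℝ) = 1/4 := by
    rw [show (-2:ℝ) = ((-2:ℤ):ℝ) by norm_num, Real.rpow_intCast]
    norm_num
  have h2 : (1/4:ℝ) ≤ t ^ α := by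
    rw [htα, ← h2m2]
    exact Real.rpow_le_rpow_of_exponent_le one_le_two hexp
  have h3 : α⁻¹/4 ≤ t ^ α / α := by
    rw [show α⁻¹/4 = (1/4)/α by field_simp]
    gcongr
  have h4 : (α⁻¹/4) ^ (1/2:ℝ) ≤ (t ^ α / α) ^ (1/2:ℝ) :=
    Real.rpow_le_rpow (by positivity) h3 (by norm_num)
  have h412 : (4:ℝ) ^ (1/2:ℝ) = 2 := by
    rw [show (4:ℝ) = (2:ℝ) ^ (2:ℕ) by norm_num, ← Real.rpow_natCast 2 2,
      ← Real.rpow_mul (by norm_num)]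
    norm_num
  have h5 : (α⁻¹/4) ^ (1/2:ℝ) = α⁻¹ ^ (1/2:ℝ) / 2 := by
    rw [Real.div_rpow (by positivity) (by norm_num), h412]
  have h6 : α ^ (-(3/2):ℝ) = α⁻¹ * α⁻¹ ^ (1/2:ℝ) := by
    rw [Real.rpow_neg hα.le, ← Real.inv_rpow hα.le,
      show (3/2:ℝ) = 1 + 1/2 by norm_num, Real.rpow_add (by positivity),
      Real.rpow_one]
  have hreal : (1/16:ℝ) * α ^ (-(3/2):ℝ) ≤ ((n:ℝ)/8) * ((t ^ α / α) ^ (1/2:ℝ)) := by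
    calc (1/16:ℝ) * α ^ (-(3/2):ℝ) = (α⁻¹/8) * (α⁻¹ ^ (1/2:ℝ) / 2) := by
          rw [h6]; ring
      _ ≤ ((n:ℝ)/8) * ((t ^ α / α) ^ (1/2:ℝ)) := by
          apply mul_le_mul (by linarith) (h5 ▸ h4) (by positivity) (by positivity)
  -- the set inclusion
  have hsub : Set.Ico (0:ℝ) t ⊆ {x | ENNReal.ofReal ((n:ℝ)/8) < sparseOpStar S f x} := by
    intro x hx
    have hg : ENNReal.ofReal ((n:ℝ)/4) ≤ sparseOpStar S f x := aux_op hα hα1 n hx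
    have hlt : ENNReal.ofReal ((n:ℝ)/8) < ENNReal.ofReal ((n:ℝ)/4) := by
      rw [ENNReal.ofReal_lt_ofReal_iff (by linarith)]
      linarith
    exact lt_of_lt_of_le hlt hg
  calc ENNReal.ofReal (1/16 * α ^ (-(3/2):ℝ)) * L2w f w
      ≤ ENNReal.ofReal (1/16 * α ^ (-(3/2):ℝ)) * 1 :=
        mul_le_mul_right (aux_L2w hα hα1) _
    _ = ENNReal.ofReal (1/16 * α ^ (-(3/2):ℝ)) := mul_one _
    _ ≤ ENNReal.ofReal (((n:ℝ)/8) * ((t ^ α / α) ^ (1/2:ℝ))) :=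
        ENNReal.ofReal_le_ofReal hreal
    _ = ENNReal.ofReal ((n:ℝ)/8) * ENNReal.ofReal ((t ^ α / α) ^ (1/2:ℝ)) :=
        ENNReal.ofReal_mul (by positivity)
    _ = ENNReal.ofReal ((n:ℝ)/8) * ENNReal.ofReal (t ^ α / α) ^ (1/2:ℝ) := by
        rw [ENNReal.ofReal_rpow_of_nonneg (by positivity) (by norm_num)]
    _ ≤ ENNReal.ofReal ((n:ℝ)/8) * wMeas w (Set.Ico 0 t) ^ (1/2:ℝ) :=
        mul_le_mul_right (ENNReal.rpow_le_rpow (aux_w hα ht) (by norm_num)) _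
    _ ≤ ENNReal.ofReal ((n:ℝ)/8) *
          wMeas w {x | ENNReal.ofReal ((n:ℝ)/8) < sparseOpStar S f x} ^ (1/2:ℝ) :=
        mul_le_mul_right
          (ENNReal.rpow_le_rpow (MeasureTheory.measure_mono hsub) (by norm_num)) _
    _ ≤ weakL2wE (sparseOpStar S f) w := by
        rw [weakL2wE]
        exact le_iSup_of_le ((n:ℝ)/8) (le_iSup_of_le (by positivity) le_rfl)
end
end

section
/- There exists an absolute constant c > 0 such that for every weight w on ℝ with [w]_{A∞} < ∞, every bounded nondegenerate interval Q, and every measurable set E ⊆ Q, one has w(E) ≤ 2 · w(Q) · (|E|/|Q|)^{c/[w]_{A∞}}. -/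
open MeasureTheory Set Filter
open scoped ENNReal NNReal

noncomputable section

namespace AInfAux

/-! ### Dyadic grid -/

def ept (a b : ℝ) (g i : ℕ) : ℝ := a + (b - a) * i / 2 ^ g

def Dy (a b : ℝ) (p : ℕ × ℕ) : Set ℝ := Ico (ept a b p.1 p.2) (ept a b p.1 (p.2 + 1))

def Sub (p q : ℕ × ℕ) : Prop :=
  q.1 ≤ p.1 ∧ q.2 * 2 ^ (p.1 - q.1) ≤ p.2 ∧ p.2 + 1 ≤ (q.2 + 1) * 2 ^ (p.1 - q.1)

variable {a b : ℝ}

lemma ept_le_ept (hab : a < b) {g i g' i' : ℕ} :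
    ept a b g i ≤ ept a b g' i' ↔ i * 2 ^ g' ≤ i' * 2 ^ g := by
  rw [ept, ept, add_le_add_iff_left, div_le_div_iff₀ (by positivity) (by positivity),
    mul_assoc, mul_assoc, mul_le_mul_iff_right₀ (by linarith : (0:ℝ) < b - a)]
  constructor <;> intro h <;> exact_mod_cast h

lemma ept_lt_ept (hab : a < b) {g i g' i' : ℕ} :
    ept a b g i < ept a b g' i' ↔ i * 2 ^ g' < i' * 2 ^ g := by
  constructor <;> intro h
  · by_contra hc
    exact absurd ((ept_le_ept hab).mpr (not_lt.mp hc)) (not_le.mpr h)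
  · by_contra hc
    exact absurd ((ept_le_ept hab).mp (not_lt.mp hc)) (not_le.mpr h)

lemma Dy_subset (hab : a < b) {p q : ℕ × ℕ} (h : Sub p q) : Dy a b p ⊆ Dy a b q := by
  obtain ⟨hg, h1, h2⟩ := h
  apply Ico_subset_Ico
  · rw [ept_le_ept hab]
    calc q.2 * 2 ^ p.1 = q.2 * 2 ^ (p.1 - q.1) * 2 ^ q.1 := by
          rw [mul_assoc, ← pow_add, Nat.sub_add_cancel hg]
    _ ≤ p.2 * 2 ^ q.1 := Nat.mul_le_mul_right _ h1
  · rw [ept_le_ept hab]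
    calc (p.2 + 1) * 2 ^ q.1 ≤ (q.2 + 1) * 2 ^ (p.1 - q.1) * 2 ^ q.1 :=
          Nat.mul_le_mul_right _ h2
    _ = (q.2 + 1) * 2 ^ p.1 := by rw [mul_assoc, ← pow_add, Nat.sub_add_cancel hg]

lemma Dy_nonempty (hab : a < b) (p : ℕ × ℕ) : (Dy a b p).Nonempty := by
  rw [Dy, nonempty_Ico, ept_lt_ept hab]
  have hpos : 0 < 2 ^ p.1 := Nat.pow_pos (by norm_num)
  exact Nat.mul_lt_mul_of_lt_of_le (Nat.lt_succ_self _) le_rfl hpos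

lemma sub_of_not_disjoint_aux (hab : a < b) {p q : ℕ × ℕ} (hg : q.1 ≤ p.1)
    (h : ¬ Disjoint (Dy a b p) (Dy a b q)) : Sub p q := by
  rw [Set.not_disjoint_iff] at h
  obtain ⟨x, ⟨hx1, hx2⟩, hx3, hx4⟩ := h
  have e1 : ept a b p.1 p.2 < ept a b q.1 (q.2 + 1) := lt_of_le_of_lt hx1 hx4
  have e2 : ept a b q.1 q.2 < ept a b p.1 (p.2 + 1) := lt_of_le_of_lt hx3 hx2
  rw [ept_lt_ept hab] at e1 e2
  refine ⟨hg, ?_, ?_⟩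
  · have h3 : q.2 * 2 ^ (p.1 - q.1) * 2 ^ q.1 < (p.2 + 1) * 2 ^ q.1 := by
      rw [mul_assoc, ← pow_add, Nat.sub_add_cancel hg]; exact e2
    have := lt_of_mul_lt_mul_right h3 (Nat.zero_le _)
    omega
  · have h3 : p.2 * 2 ^ q.1 < (q.2 + 1) * 2 ^ (p.1 - q.1) * 2 ^ q.1 := by
      rw [mul_assoc, ← pow_add, Nat.sub_add_cancel hg]; exact e1
    exact lt_of_mul_lt_mul_right h3 (Nat.zero_le _)

lemma sub_refl (p : ℕ × ℕ) : Sub p p := by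
  refine ⟨le_rfl, ?_, ?_⟩ <;> simp

lemma nested_or_disjoint (hab : a < b) (p q : ℕ × ℕ) :
    Disjoint (Dy a b p) (Dy a b q) ∨ Sub p q ∨ Sub q p := by
  by_cases hd : Disjoint (Dy a b p) (Dy a b q)
  · exact Or.inl hd
  · right
    rcases le_total q.1 p.1 with h | h
    · exact Or.inl (sub_of_not_disjoint_aux hab h hd)
    · exact Or.inr (sub_of_not_disjoint_aux hab h (fun hc => hd hc.symm))

lemma sub_eq_of_gen_eq {p q : ℕ × ℕ} (h : Sub p q) (hg : p.1 = q.1) : p = q := by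
  obtain ⟨h1, h2, h3⟩ := h
  have hz : p.1 - q.1 = 0 := by omega
  simp only [hz, pow_zero, mul_one] at h2 h3
  exact Prod.ext_iff.mpr ⟨hg, by omega⟩

lemma sub_trans (hab : a < b) {p q r : ℕ × ℕ} (h1 : Sub p q) (h2 : Sub q r) : Sub p r := by
  have hsub : Dy a b p ⊆ Dy a b r := (Dy_subset hab h1).trans (Dy_subset hab h2)
  rcases nested_or_disjoint hab p r with h | h | h
  · obtain ⟨x, hx⟩ := Dy_nonempty hab p
    exact absurd (hsub hx) (Set.disjoint_left.mp h hx)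
  · exact h
  · have hg : p.1 = r.1 := le_antisymm h.1 (le_trans h2.1 h1.1)
    have := sub_eq_of_gen_eq h hg.symm
    rw [← this]; exact sub_refl _

def par (p : ℕ × ℕ) : ℕ × ℕ := (p.1 - 1, p.2 / 2)

lemma sub_par {p : ℕ × ℕ} (hp : 1 ≤ p.1) : Sub p (par p) := by
  have h1 : p.1 - (p.1 - 1) = 1 := by omega
  refine ⟨Nat.sub_le _ _, ?_, ?_⟩
  · show p.2 / 2 * 2 ^ (p.1 - (p.1 - 1)) ≤ p.2
    rw [h1, pow_one]; omega
  · show p.2 + 1 ≤ (p.2 / 2 + 1) * 2 ^ (p.1 - (p.1 - 1))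
    rw [h1, pow_one]; omega

lemma volDy (hab : a < b) (p : ℕ × ℕ) :
    volume (Dy a b p) = ENNReal.ofReal ((b - a) / 2 ^ p.1) := by
  rw [Dy, Real.volume_Ico]
  congr 1
  rw [ept, ept]
  push_cast
  ring

lemma volDy_par (hab : a < b) {p : ℕ × ℕ} (hp : 1 ≤ p.1) :
    volume (Dy a b (par p)) = 2 * volume (Dy a b p) := by
  rw [volDy hab, volDy hab]
  have h2 : (2 : ℝ) ^ p.1 = 2 * 2 ^ (p.1 - 1) := by
    rw [← pow_succ']; congr 1; omega
  have : (b - a) / 2 ^ (par p).1 = 2 * ((b - a) / 2 ^ p.1) := by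
    show (b - a) / 2 ^ (p.1 - 1) = _
    rw [h2]; field_simp
  rw [this, ENNReal.ofReal_mul (by norm_num)]
  norm_num

lemma exists_mem_Dy (hab : a < b) {x : ℝ} (hx : x ∈ Ico a b) (g : ℕ) :
    ∃ i : ℕ, i + 1 ≤ 2 ^ g ∧ x ∈ Dy a b (g, i) := by
  have hba : (0 : ℝ) < b - a := by linarith
  have hpow : (0 : ℝ) < 2 ^ g := by positivity
  set t : ℝ := (x - a) * 2 ^ g / (b - a) with ht
  have ht0 : 0 ≤ t := by
    apply div_nonneg _ hba.le
    have h0 : 0 ≤ x - a := by linarith [hx.1]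
    positivity
  have htlt : t < 2 ^ g := by
    rw [ht, div_lt_iff₀ hba]
    have := hx.2
    nlinarith
  refine ⟨⌊t⌋₊, ?_, ?_, ?_⟩
  · have hfl : ((⌊t⌋₊ : ℕ) : ℝ) < ((2 ^ g : ℕ) : ℝ) := by
      push_cast
      calc (⌊t⌋₊ : ℝ) ≤ t := Nat.floor_le ht0
        _ < 2 ^ g := htlt
    have := Nat.cast_lt.mp hfl
    omega
  · show ept a b g ⌊t⌋₊ ≤ x
    rw [ept]
    have h1 : (⌊t⌋₊ : ℝ) ≤ t := Nat.floor_le ht0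
    rw [ht, le_div_iff₀ hba] at h1
    have : (b - a) * ⌊t⌋₊ / 2 ^ g ≤ x - a := by
      rw [div_le_iff₀ hpow]; nlinarith
    linarith
  · show x < ept a b g (⌊t⌋₊ + 1)
    rw [ept]
    have h1 : t < ⌊t⌋₊ + 1 := Nat.lt_floor_add_one t
    rw [ht, div_lt_iff₀ hba] at h1
    have : x - a < (b - a) * (⌊t⌋₊ + 1) / 2 ^ g := by
      rw [lt_div_iff₀ hpow]; push_cast; nlinarith
    push_cast
    linarith

lemma Dy_small (hab : a < b) {p : ℕ × ℕ} {x y : ℝ} (hx : x ∈ Dy a b p) (hy : y ∈ Dy a b p) :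
    |y - x| < (b - a) / 2 ^ p.1 := by
  have hlen : ept a b p.1 (p.2 + 1) = ept a b p.1 p.2 + (b - a) / 2 ^ p.1 := by
    rw [ept, ept]; push_cast; ring
  obtain ⟨hx1, hx2⟩ := hx
  obtain ⟨hy1, hy2⟩ := hy
  rw [hlen] at hx2 hy2
  rw [abs_sub_lt_iff]
  constructor <;> linarith

/-! ### Maximal elements -/

def IsMaxIn (F : Set (ℕ × ℕ)) (p : ℕ × ℕ) : Prop :=
  p ∈ F ∧ ∀ r ∈ F, Sub p r → r = p

lemma exists_maximal (hab : a < b) (F : Set (ℕ × ℕ)) :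
    ∀ n (p : ℕ × ℕ), p ∈ F → p.1 ≤ n → ∃ m, IsMaxIn F m ∧ Sub p m := by
  intro n
  induction n with
  | zero =>
    intro p hp hg
    refine ⟨p, ⟨hp, fun r hr hsub => ?_⟩, sub_refl _⟩
    have h1 : r.1 ≤ p.1 := hsub.1
    exact (sub_eq_of_gen_eq hsub (by omega)).symm
  | succ n ih =>
    intro p hp hg
    by_cases hmax : ∀ r ∈ F, Sub p r → r = p
    · exact ⟨p, ⟨hp, hmax⟩, sub_refl _⟩
    · push_neg at hmax
      obtain ⟨r, hr, hsub, hne⟩ := hmax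
      have hgen : r.1 < p.1 := by
        rcases lt_or_eq_of_le hsub.1 with h | h
        · exact h
        · exact absurd (sub_eq_of_gen_eq hsub h.symm).symm hne
      obtain ⟨m, hm, hsub2⟩ := ih r hr (by omega)
      exact ⟨m, hm, sub_trans hab hsub hsub2⟩

lemma maxIn_pairwiseDisjoint (hab : a < b) (F : Set (ℕ × ℕ)) :
    {p | IsMaxIn F p}.PairwiseDisjoint (Dy a b) := by
  intro p hp q hq hne
  rcases nested_or_disjoint hab p q with h | h | h
  · exact h
  · exact absurd (hp.2 q hq.1 h) (Ne.symm hne)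
  · exact absurd (hq.2 p hp.1 h) hne

end AInfAux

namespace AInfAux

/-! ### Weight measure basics -/

variable {w : ℝ → ℝ} {a b : ℝ}

lemma wMeas_eq (w : ℝ → ℝ) {s : Set ℝ} (hs : MeasurableSet s) :
    wMeas w s = ∫⁻ x in s, ENNReal.ofReal (w x) := withDensity_apply _ hs

lemma wMeas_ac (w : ℝ → ℝ) : wMeas w ≪ volume := withDensity_absolutelyContinuous _ _

lemma wMeas_Ico_eq_Ioo (w : ℝ → ℝ) (c d : ℝ) : wMeas w (Ico c d) = wMeas w (Ioo c d) := by
  apply le_antisymm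
  · have hsub : Ico c d ⊆ {c} ∪ Ioo c d := by
      intro x hx
      rcases eq_or_lt_of_le hx.1 with h | h
      · exact Or.inl h.symm
      · exact Or.inr ⟨h, hx.2⟩
    calc wMeas w (Ico c d) ≤ wMeas w ({c} ∪ Ioo c d) := measure_mono hsub
      _ ≤ wMeas w {c} + wMeas w (Ioo c d) := measure_union_le _ _
      _ = wMeas w (Ioo c d) := by rw [wMeas_ac w (Real.volume_singleton), zero_add]
  · exact measure_mono Ioo_subset_Ico_self

lemma wMeas_Ioo_lt_top (hw : IsWeight w) (c d : ℝ) : wMeas w (Ioo c d) < ⊤ := by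
  have hInt : IntegrableOn w (Icc c d) volume :=
    hw.2.2.integrableOn_isCompact isCompact_Icc
  calc wMeas w (Ioo c d) ≤ wMeas w (Icc c d) := measure_mono Ioo_subset_Icc_self
  _ = ∫⁻ x in Icc c d, ENNReal.ofReal (w x) := wMeas_eq w measurableSet_Icc
  _ < ⊤ := hInt.lintegral_lt_top

lemma wMeas_Ioo_pos (hw : IsWeight w) {c d : ℝ} (h : c < d) : 0 < wMeas w (Ioo c d) := by
  rw [pos_iff_ne_zero]
  intro h0
  rw [wMeas_eq w measurableSet_Ioo,
    lintegral_eq_zero_iff hw.1.ennreal_ofReal] at h0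
  have huniv : {x : ℝ | ¬ ((fun x => ENNReal.ofReal (w x)) x = (0 : ℝ → ℝ≥0∞) x)} = univ := by
    ext x
    simp [ENNReal.ofReal_eq_zero, not_le, hw.2.1 x]
  rw [EventuallyEq, ae_iff, huniv, Measure.restrict_apply_univ, Real.volume_Ioo] at h0
  rw [ENNReal.ofReal_eq_zero] at h0
  linarith

/-! ### The `A∞` budget -/

lemma le_maxFn (f : ℝ → ℝ) {c d x : ℝ} (h1 : c ≤ x) (h2 : x ≤ d) (h3 : c < d) :
    avgE f c d ≤ maxFn f x := by
  rw [maxFn]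
  exact le_iSup₂_of_le c d (le_iSup₂_of_le h1 h2 (le_iSup (fun _ => avgE f c d) h3))

lemma budget (hw : IsWeight w) {c d : ℝ} (h : c < d) :
    ∫⁻ x in Ioo c d, maxFn ((Ioo c d).indicator w) x ≤ AInf w * wMeas w (Ioo c d) := by
  have hle : (wMeas w (Ioo c d))⁻¹ * ∫⁻ x in Ioo c d, maxFn ((Ioo c d).indicator w) x
      ≤ AInf w := by
    rw [AInf]
    exact le_iSup₂_of_le c d (le_iSup_of_le h le_rfl)
  have h0 : wMeas w (Ioo c d) ≠ 0 := (wMeas_Ioo_pos hw h).ne'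
  have ht : wMeas w (Ioo c d) ≠ ⊤ := (wMeas_Ioo_lt_top hw c d).ne
  calc ∫⁻ x in Ioo c d, maxFn ((Ioo c d).indicator w) x
      = wMeas w (Ioo c d) * ((wMeas w (Ioo c d))⁻¹ *
        ∫⁻ x in Ioo c d, maxFn ((Ioo c d).indicator w) x) := by
        rw [← mul_assoc, ENNReal.mul_inv_cancel h0 ht, one_mul]
  _ ≤ wMeas w (Ioo c d) * AInf w := mul_le_mul_right hle _
  _ = AInf w * wMeas w (Ioo c d) := mul_comm _ _

lemma avgE_indicator_of_subset (hw : IsWeight w) {c d a' b' : ℝ}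
    (hsub : Ioo c d ⊆ Ioo a' b') :
    avgE ((Ioo a' b').indicator w) c d = (ENNReal.ofReal (d - c))⁻¹ * wMeas w (Ioo c d) := by
  rw [avgE, wMeas_eq w measurableSet_Ioo]
  congr 1
  refine setLIntegral_congr_fun measurableSet_Ioo (fun x hx => ?_)
  rw [indicator_of_mem (hsub hx), abs_of_pos (hw.2.1 x)]

lemma one_le_AInf (hw : IsWeight w) (hab : a < b) : 1 ≤ AInf w := by
  set ν := wMeas w (Ioo a b) with hν
  have h0 : ν ≠ 0 := (wMeas_Ioo_pos hw hab).ne'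
  have ht : ν ≠ ⊤ := (wMeas_Ioo_lt_top hw a b).ne
  have hlen0 : ENNReal.ofReal (b - a) ≠ 0 := by simp; linarith
  have hlent : ENNReal.ofReal (b - a) ≠ ⊤ := ENNReal.ofReal_ne_top
  have hpt : ∀ x ∈ Ioo a b, (ENNReal.ofReal (b - a))⁻¹ * ν
      ≤ maxFn ((Ioo a b).indicator w) x := by
    intro x hx
    rw [← avgE_indicator_of_subset hw (subset_refl _)]
    exact le_maxFn _ hx.1.le hx.2.le hab
  have hint : ν ≤ ∫⁻ x in Ioo a b, maxFn ((Ioo a b).indicator w) x := by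
    calc ν = ((ENNReal.ofReal (b - a))⁻¹ * ν) * volume (Ioo a b) := by
          rw [Real.volume_Ioo, mul_comm _ ν, mul_assoc,
            ENNReal.inv_mul_cancel hlen0 hlent, mul_one]
    _ = ∫⁻ _x in Ioo a b, ((ENNReal.ofReal (b - a))⁻¹ * ν) := (setLIntegral_const _ _).symm
    _ ≤ ∫⁻ x in Ioo a b, maxFn ((Ioo a b).indicator w) x := by
          refine setLIntegral_mono' measurableSet_Ioo hpt
  calc (1 : ℝ≥0∞) = ν⁻¹ * ν := (ENNReal.inv_mul_cancel h0 ht).symm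
  _ ≤ ν⁻¹ * ∫⁻ x in Ioo a b, maxFn ((Ioo a b).indicator w) x := mul_le_mul_right hint _
  _ ≤ AInf w := le_iSup₂_of_le a b (le_iSup_of_le hab le_rfl)

end AInfAux

namespace AInfAux

variable {w : ℝ → ℝ} {a b : ℝ}

/-! ### Calderón–Zygmund selection -/

lemma ept_lt_succ (hab : a < b) (g i : ℕ) : ept a b g i < ept a b g (i + 1) := by
  rw [ept_lt_ept hab]
  have hpos : 0 < 2 ^ g := Nat.pow_pos (by norm_num)
  exact Nat.mul_lt_mul_of_lt_of_le (Nat.lt_succ_self _) le_rfl hpos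

lemma wMeas_Dy_eq_Ioo (w : ℝ → ℝ) (p : ℕ × ℕ) :
    wMeas w (Dy a b p) = wMeas w (Ioo (ept a b p.1 p.2) (ept a b p.1 (p.2 + 1))) :=
  wMeas_Ico_eq_Ioo w _ _

lemma wMeas_Dy_pos (hw : IsWeight w) (hab : a < b) (p : ℕ × ℕ) :
    0 < wMeas w (Dy a b p) := by
  rw [wMeas_Dy_eq_Ioo]
  exact wMeas_Ioo_pos hw (ept_lt_succ hab _ _)

lemma wMeas_Dy_lt_top (hw : IsWeight w) (p : ℕ × ℕ) : wMeas w (Dy a b p) < ⊤ := by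
  rw [wMeas_Dy_eq_Ioo]
  exact wMeas_Ioo_lt_top hw _ _

lemma volDy_ne_zero (hab : a < b) (p : ℕ × ℕ) : volume (Dy a b p) ≠ 0 := by
  rw [volDy hab]
  simp only [ne_eq, ENNReal.ofReal_eq_zero, not_le]
  have hba : (0:ℝ) < b - a := by linarith
  positivity

lemma volDy_ne_top (hab : a < b) (p : ℕ × ℕ) : volume (Dy a b p) ≠ ⊤ := by
  rw [volDy hab]; exact ENNReal.ofReal_ne_top

def Fcz (w : ℝ → ℝ) (a b : ℝ) (J : ℕ × ℕ) (t : ℝ≥0∞) : Set (ℕ × ℕ) :=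
  {p | Sub p J ∧ t * volume (Dy a b p) < wMeas w (Dy a b p)}

def MaxCZ (w : ℝ → ℝ) (a b : ℝ) (J : ℕ × ℕ) (t : ℝ≥0∞) : Set (ℕ × ℕ) :=
  {p | IsMaxIn (Fcz w a b J t) p}

def OmCZ (w : ℝ → ℝ) (a b : ℝ) (J : ℕ × ℕ) (t : ℝ≥0∞) : Set ℝ :=
  ⋃ p ∈ MaxCZ w a b J t, Dy a b p

lemma measurableSet_OmCZ (J : ℕ × ℕ) (t : ℝ≥0∞) : MeasurableSet (OmCZ w a b J t) :=
  MeasurableSet.biUnion (Set.to_countable _) (fun _ _ => measurableSet_Ico)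

lemma maxCZ_pairwise (hab : a < b) (J : ℕ × ℕ) (t : ℝ≥0∞) :
    (MaxCZ w a b J t).PairwiseDisjoint (Dy a b) :=
  maxIn_pairwiseDisjoint hab _

lemma cz_exists (hab : a < b) {J : ℕ × ℕ} {t : ℝ≥0∞} {q : ℕ × ℕ}
    (hq : q ∈ Fcz w a b J t) : ∃ p ∈ MaxCZ w a b J t, Sub q p := by
  obtain ⟨m, hm, hsub⟩ := exists_maximal hab (Fcz w a b J t) q.1 q hq le_rfl
  exact ⟨m, hm, hsub⟩

lemma cz_sub {J : ℕ × ℕ} {t : ℝ≥0∞} {p : ℕ × ℕ} (hp : p ∈ MaxCZ w a b J t) : Sub p J :=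
  hp.1.1

lemma meas_OmCZ (hab : a < b) (μ : Measure ℝ) (J : ℕ × ℕ) (t : ℝ≥0∞) :
    μ (OmCZ w a b J t) = ∑' p : MaxCZ w a b J t, μ (Dy a b p) :=
  measure_biUnion (Set.to_countable _) (maxCZ_pairwise hab J t) (fun _ _ => measurableSet_Ico)

lemma OmCZ_subset (hab : a < b) (J : ℕ × ℕ) (t : ℝ≥0∞) :
    OmCZ w a b J t ⊆ Dy a b J :=
  iUnion₂_subset fun _ hp => Dy_subset hab (cz_sub hp)

lemma cz_upper (hab : a < b)
    {J : ℕ × ℕ} {t : ℝ≥0∞} (hJ : wMeas w (Dy a b J) ≤ t * volume (Dy a b J))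
    {p : ℕ × ℕ} (hp : p ∈ MaxCZ w a b J t) :
    wMeas w (Dy a b p) ≤ 2 * t * volume (Dy a b p) := by
  have hpJ : p ≠ J := by
    rintro rfl
    exact absurd hp.1.2 (not_lt.mpr hJ)
  have hgen : J.1 < p.1 :=
    lt_of_le_of_ne hp.1.1.1 (fun h => hpJ (sub_eq_of_gen_eq hp.1.1 h.symm))
  have hq1 : Sub p (par p) := sub_par (by omega)
  have hq2 : Sub (par p) J := by
    rcases nested_or_disjoint hab (par p) J with h | h | h
    · obtain ⟨x, hx⟩ := Dy_nonempty hab p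
      exact absurd (Dy_subset hab hp.1.1 hx) (Set.disjoint_left.mp h (Dy_subset hab hq1 hx))
    · exact h
    · have hg : J.1 = (par p).1 := by
        have h1 : (par p).1 ≤ J.1 := h.1
        have h2 : (par p).1 = p.1 - 1 := rfl
        omega
      have e := sub_eq_of_gen_eq h hg
      rw [e]
      exact sub_refl _
  have hparF : par p ∉ Fcz w a b J t := by
    intro hF
    have he := hp.2 (par p) hF hq1
    have : (par p).1 = p.1 := by rw [he]
    have h2 : (par p).1 = p.1 - 1 := rfl
    omega
  have hpar_le : wMeas w (Dy a b (par p)) ≤ t * volume (Dy a b (par p)) := by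
    by_contra hc
    exact hparF ⟨hq2, not_le.mp hc⟩
  calc wMeas w (Dy a b p) ≤ wMeas w (Dy a b (par p)) := measure_mono (Dy_subset hab hq1)
  _ ≤ t * volume (Dy a b (par p)) := hpar_le
  _ = 2 * t * volume (Dy a b p) := by rw [volDy_par hab (by omega)]; ring

lemma νOm_le_vol (hab : a < b)
    {J : ℕ × ℕ} {t : ℝ≥0∞} (hJ : wMeas w (Dy a b J) ≤ t * volume (Dy a b J)) :
    wMeas w (OmCZ w a b J t) ≤ 2 * t * volume (OmCZ w a b J t) := by
  rw [meas_OmCZ hab, meas_OmCZ hab]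
  calc ∑' p : MaxCZ w a b J t, wMeas w (Dy a b p)
      ≤ ∑' p : MaxCZ w a b J t, 2 * t * volume (Dy a b p) :=
        ENNReal.tsum_le_tsum (fun p => cz_upper hab hJ p.2)
  _ = 2 * t * ∑' p : MaxCZ w a b J t, volume (Dy a b p) := ENNReal.tsum_mul_left

lemma OmCZ_mono (hab : a < b) {J : ℕ × ℕ} {t t' : ℝ≥0∞}
    (hJ' : wMeas w (Dy a b J) ≤ t' * volume (Dy a b J)) (htt : t' ≤ t) :
    OmCZ w a b J t ⊆ OmCZ w a b J t' := by
  intro x hx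
  rw [OmCZ, mem_iUnion₂] at hx
  obtain ⟨p, hp, hxp⟩ := hx
  have hpF' : p ∈ Fcz w a b J t' :=
    ⟨hp.1.1, lt_of_le_of_lt (mul_le_mul_left htt _) hp.1.2⟩
  obtain ⟨m, hm, hsub⟩ := cz_exists hab hpF'
  exact mem_biUnion hm (Dy_subset hab hsub hxp)

/-! ### The decay lemma -/

lemma decay (hw : IsWeight w) (hab : a < b) (hA1 : 1 ≤ AInf w) (hAt : AInf w ≠ ⊤)
    (J : ℕ × ℕ) (n₀ : ℕ) (hn₀ : 8 * AInf w ≤ (n₀ : ℝ≥0∞)) :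
    2 * wMeas w (OmCZ w a b J (2 ^ n₀ * (wMeas w (Dy a b J) / volume (Dy a b J))))
      ≤ wMeas w (Dy a b J) := by
  classical
  set cJ := ept a b J.1 J.2 with hcJ
  set dJ := ept a b J.1 (J.2 + 1) with hdJ
  have hcd : cJ < dJ := ept_lt_succ hab _ _
  set νJ := wMeas w (Dy a b J) with hνJdef
  set vJ := volume (Dy a b J) with hvJdef
  have hνJ_Ioo : νJ = wMeas w (Ioo cJ dJ) := wMeas_Dy_eq_Ioo w J
  have hν0 : νJ ≠ 0 := (wMeas_Dy_pos hw hab J).ne'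
  have hνt : νJ ≠ ⊤ := (wMeas_Dy_lt_top hw J).ne
  have hv0 : vJ ≠ 0 := volDy_ne_zero hab J
  have hvt : vJ ≠ ⊤ := volDy_ne_top hab J
  set lam := νJ / vJ with hlamdef
  have hlam_eq : lam * vJ = νJ := ENNReal.div_mul_cancel hv0 hvt
  have hJk : ∀ k : ℕ, νJ ≤ 2 ^ k * lam * vJ := by
    intro k
    calc νJ = lam * vJ := hlam_eq.symm
    _ ≤ 2 ^ k * lam * vJ := by
        rw [mul_assoc]
        exact le_mul_of_one_le_left zero_le (one_le_pow_of_one_le' (by norm_num) k)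
  set Om : ℕ → Set ℝ := fun k => OmCZ w a b J (2 ^ k * lam) with hOmdef
  have hOm_meas : ∀ k, MeasurableSet (Om k) := fun k => measurableSet_OmCZ J _
  have hOm_mono : ∀ {k k' : ℕ}, k' ≤ k → Om k ⊆ Om k' := by
    intro k k' hkk
    exact OmCZ_mono hab (hJk k') (mul_le_mul_left (pow_le_pow_right₀ (by norm_num) hkk) lam)
  -- pointwise bound
  have hpoint : ∀ x ∈ Ioo cJ dJ,
      (∑ k ∈ Finset.Ioc 0 n₀, (Om k).indicator (fun _ => 2 ^ (k - 1) * lam) x)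
        ≤ maxFn ((Ioo cJ dJ).indicator w) x := by
    intro x hx
    by_cases hex : ∃ k ∈ Finset.Ioc 0 n₀, x ∈ Om k
    · obtain ⟨k₀, hk₀, hxk₀⟩ := hex
      rw [Finset.mem_Ioc] at hk₀
      set m := Nat.findGreatest (fun k => x ∈ Om k) n₀ with hmdef
      have hmn : m ≤ n₀ := Nat.findGreatest_le n₀
      have hm1 : 1 ≤ m := le_trans hk₀.1 (Nat.le_findGreatest hk₀.2 hxk₀)
      have hxm : x ∈ Om m := Nat.findGreatest_spec (P := fun k => x ∈ Om k) hk₀.2 hxk₀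
      have hsplit := Finset.sum_Ioc_consecutive
        (fun k => (Om k).indicator (fun _ => (2:ℝ≥0∞) ^ (k - 1) * lam) x)
        (Nat.zero_le m) hmn
      have h2 : ∑ k ∈ Finset.Ioc m n₀,
          (Om k).indicator (fun _ => (2:ℝ≥0∞) ^ (k - 1) * lam) x = 0 := by
        refine Finset.sum_eq_zero (fun k hk => ?_)
        rw [Finset.mem_Ioc] at hk
        have hnot : x ∉ Om k := fun hmem =>
          absurd (Nat.le_findGreatest (P := fun k => x ∈ Om k) hk.2 hmem) (not_le.mpr hk.1)
        exact indicator_of_notMem hnot _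
      have h1 : ∑ k ∈ Finset.Ioc 0 m,
          (Om k).indicator (fun _ => (2:ℝ≥0∞) ^ (k - 1) * lam) x
          = (∑ k ∈ Finset.Ioc 0 m, (2:ℝ≥0∞) ^ (k - 1)) * lam := by
        rw [Finset.sum_mul]
        refine Finset.sum_congr rfl (fun k hk => ?_)
        rw [Finset.mem_Ioc] at hk
        exact indicator_of_mem (hOm_mono hk.2 hxm) _
      have hgeom : ∀ M : ℕ, (∑ k ∈ Finset.Ioc 0 M, (2:ℝ≥0∞) ^ (k - 1)) ≤ 2 ^ M := by
        intro M
        induction M with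
        | zero => simp
        | succ M ih =>
          rw [Finset.sum_Ioc_succ_top (Nat.zero_le M)]
          calc (∑ k ∈ Finset.Ioc 0 M, (2:ℝ≥0∞) ^ (k - 1)) + 2 ^ (M + 1 - 1)
              ≤ 2 ^ M + 2 ^ M := by
                exact add_le_add ih (le_of_eq (by simp))
          _ = 2 ^ (M + 1) := by rw [pow_succ]; ring
      -- the maximal function bound at x
      obtain ⟨p, hp, hxp⟩ := mem_iUnion₂.mp hxm
      have hsubIoo : Ioo (ept a b p.1 p.2) (ept a b p.1 (p.2 + 1)) ⊆ Ioo cJ dJ := by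
        have hsub := Dy_subset hab (cz_sub hp)
        rw [Dy, Dy] at hsub
        rw [Set.Ico_subset_Ico_iff (ept_lt_succ hab _ _)] at hsub
        exact Ioo_subset_Ioo hsub.1 hsub.2
      have havg := avgE_indicator_of_subset hw hsubIoo
      have hmax := le_maxFn ((Ioo cJ dJ).indicator w) hxp.1 hxp.2.le (ept_lt_succ hab _ _)
      rw [havg] at hmax
      have hkey : (2:ℝ≥0∞) ^ m * lam ≤ (ENNReal.ofReal (ept a b p.1 (p.2 + 1) - ept a b p.1 p.2))⁻¹ *
          wMeas w (Ioo (ept a b p.1 p.2) (ept a b p.1 (p.2 + 1))) := by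
        have hlow := hp.1.2
        have hIoo : wMeas w (Ioo (ept a b p.1 p.2) (ept a b p.1 (p.2 + 1)))
            = wMeas w (Dy a b p) := (wMeas_Dy_eq_Ioo w p).symm
        have hvol : volume (Dy a b p)
            = ENNReal.ofReal (ept a b p.1 (p.2 + 1) - ept a b p.1 p.2) := by
          rw [Dy, Real.volume_Ico]
        rw [hIoo, ← hvol, mul_comm ((volume (Dy a b p)))⁻¹ _, ← div_eq_mul_inv,
          ENNReal.le_div_iff_mul_le (Or.inl (volDy_ne_zero hab p))
            (Or.inl (volDy_ne_top hab p))]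
        exact hlow.le
      calc ∑ k ∈ Finset.Ioc 0 n₀, (Om k).indicator (fun _ => (2:ℝ≥0∞) ^ (k - 1) * lam) x
          = (∑ k ∈ Finset.Ioc 0 m, (2:ℝ≥0∞) ^ (k - 1)) * lam := by
            rw [← hsplit, h1, h2, add_zero]
      _ ≤ 2 ^ m * lam := mul_le_mul_left (hgeom m) lam
      _ ≤ _ := le_trans hkey hmax
    · push_neg at hex
      have hz : ∀ k ∈ Finset.Ioc 0 n₀,
          (Om k).indicator (fun _ => (2:ℝ≥0∞) ^ (k - 1) * lam) x = 0 :=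
        fun k hk => indicator_of_notMem (hex k hk) _
      rw [Finset.sum_congr rfl hz]
      simp
  -- integral bound
  have hOmIco : ∀ k, volume (Om k) = volume (Om k ∩ Ioo cJ dJ) := by
    intro k
    apply le_antisymm _ (measure_mono inter_subset_left)
    have hsub2 : Om k ⊆ (Om k ∩ Ioo cJ dJ) ∪ {cJ} := by
      intro x hx
      have hxJ : x ∈ Ico cJ dJ := OmCZ_subset hab J _ hx
      rcases eq_or_lt_of_le hxJ.1 with h | h
      · exact Or.inr (by simp [h.symm])
      · exact Or.inl ⟨hx, h, hxJ.2⟩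
    calc volume (Om k) ≤ volume (Om k ∩ Ioo cJ dJ) + volume {cJ} :=
          le_trans (measure_mono hsub2) (measure_union_le _ _)
    _ = volume (Om k ∩ Ioo cJ dJ) := by rw [Real.volume_singleton, add_zero]
  have hsum_le : ∑ k ∈ Finset.Ioc 0 n₀, 2 ^ (k - 1) * lam * volume (Om k)
      ≤ AInf w * νJ := by
    calc ∑ k ∈ Finset.Ioc 0 n₀, 2 ^ (k - 1) * lam * volume (Om k)
        = ∑ k ∈ Finset.Ioc 0 n₀,
            ∫⁻ x in Ioo cJ dJ, (Om k).indicator (fun _ => 2 ^ (k - 1) * lam) x := by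
          refine Finset.sum_congr rfl (fun k _ => ?_)
          rw [lintegral_indicator_const (hOm_meas k), Measure.restrict_apply (hOm_meas k),
            ← hOmIco k]
    _ = ∫⁻ x in Ioo cJ dJ, ∑ k ∈ Finset.Ioc 0 n₀,
          (Om k).indicator (fun _ => 2 ^ (k - 1) * lam) x :=
        (lintegral_finset_sum _ (fun k _ => measurable_const.indicator (hOm_meas k))).symm
    _ ≤ ∫⁻ x in Ioo cJ dJ, maxFn ((Ioo cJ dJ).indicator w) x :=
        setLIntegral_mono' measurableSet_Ioo hpoint
    _ ≤ AInf w * wMeas w (Ioo cJ dJ) := budget hw hcd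
    _ = AInf w * νJ := by rw [← hνJ_Ioo]
  have hν_le : ∀ k ∈ Finset.Ioc 0 n₀,
      wMeas w (Om k) ≤ 4 * (2 ^ (k - 1) * lam * volume (Om k)) := by
    intro k hk
    obtain ⟨hk1, _⟩ := Finset.mem_Ioc.mp hk
    refine le_trans (νOm_le_vol hab (hJk k)) (le_of_eq ?_)
    have h2k : (2:ℝ≥0∞) ^ k = 2 * 2 ^ (k - 1) := by
      rw [← pow_succ']
      congr 1
      omega
    generalize volume (Om k) = V
    rw [h2k]; ring
  have hsum2 : ∑ k ∈ Finset.Ioc 0 n₀, wMeas w (Om k) ≤ 4 * (AInf w * νJ) := by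
    calc ∑ k ∈ Finset.Ioc 0 n₀, wMeas w (Om k)
        ≤ ∑ k ∈ Finset.Ioc 0 n₀, 4 * (2 ^ (k - 1) * lam * volume (Om k)) :=
          Finset.sum_le_sum hν_le
    _ = 4 * ∑ k ∈ Finset.Ioc 0 n₀, 2 ^ (k - 1) * lam * volume (Om k) :=
          (Finset.mul_sum _ _ _).symm
    _ ≤ 4 * (AInf w * νJ) := mul_le_mul_right hsum_le _
  have hcard : (n₀ : ℝ≥0∞) * wMeas w (Om n₀) ≤ ∑ k ∈ Finset.Ioc 0 n₀, wMeas w (Om k) := by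
    have hmono : ∀ k ∈ Finset.Ioc 0 n₀, wMeas w (Om n₀) ≤ wMeas w (Om k) := fun k hk =>
      measure_mono (hOm_mono (Finset.mem_Ioc.mp hk).2)
    calc (n₀ : ℝ≥0∞) * wMeas w (Om n₀) = (Finset.Ioc 0 n₀).card • wMeas w (Om n₀) := by
          rw [Nat.card_Ioc]
          simp [nsmul_eq_mul]
    _ ≤ _ := Finset.card_nsmul_le_sum _ _ _ hmono
  have hA0 : AInf w ≠ 0 := by
    intro h
    rw [h] at hA1
    simp at hA1
  have h8 : 4 * AInf w * (2 * wMeas w (Om n₀)) ≤ 4 * AInf w * νJ := by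
    calc 4 * AInf w * (2 * wMeas w (Om n₀)) = 8 * AInf w * wMeas w (Om n₀) := by ring
    _ ≤ (n₀ : ℝ≥0∞) * wMeas w (Om n₀) := mul_le_mul_left hn₀ _
    _ ≤ ∑ k ∈ Finset.Ioc 0 n₀, wMeas w (Om k) := hcard
    _ ≤ 4 * (AInf w * νJ) := hsum2
    _ = 4 * AInf w * νJ := by ring
  exact (ENNReal.mul_le_mul_iff_right (by simp [hA0]) (ENNReal.mul_ne_top (by norm_num) hAt)).mp h8

end AInfAux

namespace AInfAux

variable {w : ℝ → ℝ} {a b : ℝ}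

/-! ### The stopping-time families -/

lemma Dy_root : Dy a b (0, 0) = Ico a b := by
  have h0 : ept a b 0 0 = a := by simp [ept]
  have h1 : ept a b 0 1 = b := by simp [ept]
  rw [Dy]
  simp only [h0, h1]

lemma nu_le_pow_lam (hab : a < b) (J : ℕ × ℕ) (k : ℕ) :
    wMeas w (Dy a b J)
      ≤ 2 ^ k * (wMeas w (Dy a b J) / volume (Dy a b J)) * volume (Dy a b J) := by
  calc wMeas w (Dy a b J)
      = wMeas w (Dy a b J) / volume (Dy a b J) * volume (Dy a b J) :=
        (ENNReal.div_mul_cancel (volDy_ne_zero hab J) (volDy_ne_top hab J)).symm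
  _ ≤ 2 ^ k * (wMeas w (Dy a b J) / volume (Dy a b J)) * volume (Dy a b J) := by
      rw [mul_assoc]
      exact le_mul_of_one_le_left zero_le (one_le_pow_of_one_le' (by norm_num) k)

def famF (w : ℝ → ℝ) (a b : ℝ) (n₀ : ℕ) : ℕ → Set (ℕ × ℕ)
  | 0 => {(0, 0)}
  | j + 1 => {p | ∃ J ∈ famF w a b n₀ j,
      p ∈ MaxCZ w a b J (2 ^ n₀ * (wMeas w (Dy a b J) / volume (Dy a b J)))}

lemma half_of_two_mul_le {x y : ℝ≥0∞} (h : 2 * x ≤ y) : x ≤ 2⁻¹ * y := by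
  calc x = 2⁻¹ * (2 * x) := by
        rw [← mul_assoc, ENNReal.inv_mul_cancel (by norm_num) (by norm_num), one_mul]
  _ ≤ 2⁻¹ * y := mul_le_mul_right h _

lemma famF_inv (hw : IsWeight w) (hab : a < b) (hA1 : 1 ≤ AInf w) (hAt : AInf w ≠ ⊤)
    (n₀ : ℕ) (hn₀ : 8 * AInf w ≤ (n₀ : ℝ≥0∞)) (j : ℕ) :
    (∀ p ∈ famF w a b n₀ j, Sub p (0, 0)) ∧
    (∀ p ∈ famF w a b n₀ j, wMeas w (Dy a b p) ≤
       2 ^ ((n₀ + 1) * j) * (wMeas w (Dy a b (0, 0)) / volume (Dy a b (0, 0)))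
         * volume (Dy a b p)) ∧
    (famF w a b n₀ j).PairwiseDisjoint (Dy a b) ∧
    (wMeas w (⋃ p ∈ famF w a b n₀ j, Dy a b p) ≤ 2⁻¹ ^ j * wMeas w (Dy a b (0, 0))) ∧
    (∀ q : ℕ × ℕ, Sub q (0, 0) →
       2 ^ ((n₀ + 1) * j) * (wMeas w (Dy a b (0, 0)) / volume (Dy a b (0, 0)))
           * volume (Dy a b q) < wMeas w (Dy a b q) →
         ∃ p ∈ famF w a b n₀ j, Sub q p) := by
  induction j with
  | zero =>
    refine ⟨?_, ?_, ?_, ?_, ?_⟩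
    · intro p hp
      rw [famF, mem_singleton_iff] at hp
      rw [hp]; exact sub_refl _
    · intro p hp
      rw [famF, mem_singleton_iff] at hp
      subst hp
      rw [Nat.mul_zero, pow_zero, one_mul,
        ENNReal.div_mul_cancel (volDy_ne_zero hab _) (volDy_ne_top hab _)]
    · rw [famF]; exact pairwiseDisjoint_singleton _ _
    · rw [famF, biUnion_singleton, pow_zero, one_mul]
    · intro q hq _
      exact ⟨(0, 0), by rw [famF]; exact mem_singleton _, hq⟩
  | succ j ih =>
    obtain ⟨ih1, ih2, ih3, ih4, ih5⟩ := ih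
    set lam0 := wMeas w (Dy a b (0, 0)) / volume (Dy a b (0, 0)) with hlam0
    have hmem : ∀ {p : ℕ × ℕ}, p ∈ famF w a b n₀ (j + 1) ↔ ∃ J ∈ famF w a b n₀ j,
        p ∈ MaxCZ w a b J (2 ^ n₀ * (wMeas w (Dy a b J) / volume (Dy a b J))) := by
      intro p; rw [famF]; rfl
    have hlamJ : ∀ J ∈ famF w a b n₀ j,
        wMeas w (Dy a b J) / volume (Dy a b J) ≤ 2 ^ ((n₀ + 1) * j) * lam0 := by
      intro J hJ
      rw [ENNReal.div_le_iff_le_mul (Or.inl (volDy_ne_zero hab J))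
        (Or.inl (volDy_ne_top hab J))]
      exact ih2 J hJ
    refine ⟨?_, ?_, ?_, ?_, ?_⟩
    · intro p hp
      obtain ⟨J, hJ, hpJ⟩ := hmem.mp hp
      exact sub_trans hab (cz_sub hpJ) (ih1 J hJ)
    · intro p hp
      obtain ⟨J, hJ, hpJ⟩ := hmem.mp hp
      have hub := cz_upper hab (nu_le_pow_lam hab J n₀) hpJ
      calc wMeas w (Dy a b p)
          ≤ 2 * (2 ^ n₀ * (wMeas w (Dy a b J) / volume (Dy a b J))) * volume (Dy a b p) :=
            hub
      _ ≤ 2 * (2 ^ n₀ * (2 ^ ((n₀ + 1) * j) * lam0)) * volume (Dy a b p) := by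
          gcongr
          exact hlamJ J hJ
      _ = 2 ^ ((n₀ + 1) * (j + 1)) * lam0 * volume (Dy a b p) := by
          rw [show (n₀ + 1) * (j + 1) = ((n₀ + 1) * j + n₀) + 1 by ring, pow_succ, pow_add]
          ring
    · rintro p hp q hq hne
      obtain ⟨J, hJ, hpJ⟩ := hmem.mp hp
      obtain ⟨J', hJ', hqJ'⟩ := hmem.mp hq
      by_cases hJJ : J = J'
      · subst hJJ
        exact maxCZ_pairwise hab J _ hpJ hqJ' hne
      · exact Disjoint.mono (Dy_subset hab (cz_sub hpJ)) (Dy_subset hab (cz_sub hqJ'))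
          (ih3 hJ hJ' hJJ)
    · have hsub : (⋃ p ∈ famF w a b n₀ (j + 1), Dy a b p) ⊆
          ⋃ J ∈ famF w a b n₀ j,
            OmCZ w a b J (2 ^ n₀ * (wMeas w (Dy a b J) / volume (Dy a b J))) := by
        intro x hx
        rw [mem_iUnion₂] at hx
        obtain ⟨p, hp, hxp⟩ := hx
        obtain ⟨J, hJ, hpJ⟩ := hmem.mp hp
        exact mem_biUnion hJ (mem_biUnion hpJ hxp)
      calc wMeas w (⋃ p ∈ famF w a b n₀ (j + 1), Dy a b p)
          ≤ wMeas w (⋃ J ∈ famF w a b n₀ j,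
              OmCZ w a b J (2 ^ n₀ * (wMeas w (Dy a b J) / volume (Dy a b J)))) :=
            measure_mono hsub
      _ ≤ ∑' J : famF w a b n₀ j,
            wMeas w (OmCZ w a b J (2 ^ n₀ * (wMeas w (Dy a b J) / volume (Dy a b J)))) :=
            measure_biUnion_le _ (Set.to_countable _) _
      _ ≤ ∑' J : famF w a b n₀ j, 2⁻¹ * wMeas w (Dy a b J) :=
            ENNReal.tsum_le_tsum (fun J =>
              half_of_two_mul_le (decay hw hab hA1 hAt J n₀ hn₀))
      _ = 2⁻¹ * ∑' J : famF w a b n₀ j, wMeas w (Dy a b J) := ENNReal.tsum_mul_left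
      _ = 2⁻¹ * wMeas w (⋃ J ∈ famF w a b n₀ j, Dy a b J) := by
            rw [measure_biUnion (Set.to_countable _) ih3 (fun _ _ => measurableSet_Ico)]
      _ ≤ 2⁻¹ * (2⁻¹ ^ j * wMeas w (Dy a b (0, 0))) := mul_le_mul_right ih4 _
      _ = 2⁻¹ ^ (j + 1) * wMeas w (Dy a b (0, 0)) := by rw [pow_succ']; ring
    · intro q hq0 hql
      have hLmono : 2 ^ ((n₀ + 1) * j) * lam0 * volume (Dy a b q)
          ≤ 2 ^ ((n₀ + 1) * (j + 1)) * lam0 * volume (Dy a b q) := by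
        gcongr
        · norm_num
        · exact Nat.le_succ j
      obtain ⟨J, hJ, hqJ⟩ := ih5 q hq0 (lt_of_le_of_lt hLmono hql)
      have hqF : q ∈ Fcz w a b J (2 ^ n₀ * (wMeas w (Dy a b J) / volume (Dy a b J))) := by
        refine ⟨hqJ, ?_⟩
        calc 2 ^ n₀ * (wMeas w (Dy a b J) / volume (Dy a b J)) * volume (Dy a b q)
            ≤ 2 ^ n₀ * (2 ^ ((n₀ + 1) * j) * lam0) * volume (Dy a b q) := by
              gcongr
              exact hlamJ J hJ
        _ ≤ 2 ^ ((n₀ + 1) * (j + 1)) * lam0 * volume (Dy a b q) := by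
              rw [← mul_assoc, ← pow_add]
              gcongr
              · norm_num
              · rw [Nat.mul_succ]; omega
        _ < wMeas w (Dy a b q) := hql
      obtain ⟨p, hp, hsub⟩ := cz_exists hab hqF
      exact ⟨p, hmem.mpr ⟨J, hJ, hp⟩, hsub⟩

/-! ### The complement estimate -/

lemma compl_bound (hw : IsWeight w) (hab : a < b) (L : ℝ≥0∞) (hL : L ≠ ⊤)
    (S : Set ℝ) (hS : S ⊆ Ioo a b)
    (hq : ∀ q : ℕ × ℕ, Sub q (0, 0) →
      L * volume (Dy a b q) < wMeas w (Dy a b q) → S ∩ Dy a b q = ∅) :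
    wMeas w S ≤ L * volume S := by
  have main : ∀ r : ℝ≥0∞, volume S < r → wMeas w S ≤ L * r := by
    intro r hr
    obtain ⟨U, hSU, hUopen, hUr⟩ := Set.exists_isOpen_lt_of_lt S r hr
    set V := U ∩ Ioo a b with hV
    have hVopen : IsOpen V := hUopen.inter isOpen_Ioo
    have hSV : S ⊆ V := subset_inter hSU hS
    set F : Set (ℕ × ℕ) := {p | Sub p (0, 0) ∧ Dy a b p ⊆ V} with hF
    set M : Set (ℕ × ℕ) := {p | IsMaxIn F p} with hM
    have hMdisj : M.PairwiseDisjoint (Dy a b) := maxIn_pairwiseDisjoint hab F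
    have hcover : S ⊆ ⋃ p ∈ M, Dy a b p := by
      intro x hx
      have hxV : x ∈ V := hSV hx
      obtain ⟨ε, hε, hball⟩ := Metric.isOpen_iff.mp hVopen x hxV
      obtain ⟨g, hg⟩ := pow_unbounded_of_one_lt ((b - a) / ε) (by norm_num : (1:ℝ) < 2)
      have hlen : (b - a) / 2 ^ g < ε := by
        rw [div_lt_iff₀ (by positivity)]
        rw [div_lt_iff₀ hε] at hg
        nlinarith
      obtain ⟨i, hi, hxD⟩ := exists_mem_Dy hab (Ioo_subset_Ico_self (hS hx)) g
      have hDball : Dy a b (g, i) ⊆ Metric.ball x ε := by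
        intro y hy
        rw [Metric.mem_ball, Real.dist_eq]
        exact lt_trans (Dy_small hab hxD hy) hlen
      have hgF : (g, i) ∈ F := by
        refine ⟨⟨Nat.zero_le _, by simp, by simpa using hi⟩, hDball.trans hball⟩
      obtain ⟨m, hm, hsub⟩ := exists_maximal hab F g (g, i) hgF le_rfl
      exact mem_biUnion hm (Dy_subset hab hsub hxD)
    calc wMeas w S ≤ wMeas w (⋃ p ∈ M, S ∩ Dy a b p) := by
          refine measure_mono (fun x hx => ?_)
          obtain ⟨p, hp, hxp⟩ := mem_iUnion₂.mp (hcover hx)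
          exact mem_biUnion hp ⟨hx, hxp⟩
    _ ≤ ∑' p : M, wMeas w (S ∩ Dy a b p) := measure_biUnion_le _ (Set.to_countable _) _
    _ ≤ ∑' p : M, L * volume (Dy a b p) := by
          refine ENNReal.tsum_le_tsum (fun p => ?_)
          by_cases hc : L * volume (Dy a b (p : ℕ × ℕ)) < wMeas w (Dy a b (p : ℕ × ℕ))
          · rw [hq p p.2.1.1 hc]
            simp
          · exact le_trans (measure_mono inter_subset_right) (not_lt.mp hc)
    _ = L * ∑' p : M, volume (Dy a b p) := ENNReal.tsum_mul_left
    _ = L * volume (⋃ p ∈ M, Dy a b p) := by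
          rw [measure_biUnion (Set.to_countable _) hMdisj (fun _ _ => measurableSet_Ico)]
    _ ≤ L * r := by
          have hsubV : (⋃ p ∈ M, Dy a b p) ⊆ V := iUnion₂_subset (fun p hp => hp.1.2)
          have hvr : volume (⋃ p ∈ M, Dy a b p) ≤ r :=
            le_trans (measure_mono (hsubV.trans inter_subset_left)) hUr.le
          exact mul_le_mul_right hvr _
  have hvs : volume S ≠ ⊤ := by
    refine ne_top_of_le_ne_top ?_ (measure_mono (hS.trans Ioo_subset_Icc_self))
    rw [Real.volume_Icc]
    exact ENNReal.ofReal_ne_top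
  rcases eq_or_ne L 0 with hL0 | hL0
  · subst hL0
    have := main (volume S + 1) (ENNReal.lt_add_right hvs one_ne_zero)
    simpa using this
  refine ENNReal.le_of_forall_pos_le_add (fun ε hε hfin => ?_)
  have hε0 : (ε : ℝ≥0∞) / L ≠ 0 := by
    simp [ENNReal.div_eq_zero_iff, hL, (by exact_mod_cast hε.ne' : (ε:ℝ≥0∞) ≠ 0)]
  calc wMeas w S ≤ L * (volume S + (ε : ℝ≥0∞) / L) :=
        main _ (ENNReal.lt_add_right hvs hε0)
  _ = L * volume S + L * ((ε : ℝ≥0∞) / L) := by rw [mul_add]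
  _ ≤ L * volume S + ε := add_le_add_right ENNReal.mul_div_le _

end AInfAux

namespace AInfAux

variable {w : ℝ → ℝ} {a b : ℝ}

lemma key_estimate (hw : IsWeight w) (hab : a < b) (hA1 : 1 ≤ AInf w) (hAt : AInf w ≠ ⊤)
    (n₀ : ℕ) (hn₀ : 8 * AInf w ≤ (n₀ : ℝ≥0∞))
    (E : Set ℝ) (hE : E ⊆ Ioo a b) (j : ℕ) :
    wMeas w E ≤ 2⁻¹ ^ j * wMeas w (Ioo a b)
      + 2 ^ ((n₀ + 1) * j) * (wMeas w (Ioo a b) / ENNReal.ofReal (b - a)) * volume E := by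
  obtain ⟨inv1, inv2, inv3, inv4, inv5⟩ := famF_inv hw hab hA1 hAt n₀ hn₀ j
  have hroot_ν : wMeas w (Dy a b (0, 0)) = wMeas w (Ioo a b) := by
    rw [Dy_root]; exact wMeas_Ico_eq_Ioo w a b
  have hroot_v : volume (Dy a b (0, 0)) = ENNReal.ofReal (b - a) := by
    rw [Dy_root, Real.volume_Ico]
  have hLt : 2 ^ ((n₀ + 1) * j) * (wMeas w (Dy a b (0, 0)) / volume (Dy a b (0, 0))) ≠ ⊤ :=
    ENNReal.mul_ne_top (by simp)
      (ENNReal.div_lt_top (wMeas_Dy_lt_top hw _).ne (volDy_ne_zero hab _)).ne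
  have hcompl : wMeas w (E \ ⋃ p ∈ famF w a b n₀ j, Dy a b p)
      ≤ 2 ^ ((n₀ + 1) * j) * (wMeas w (Dy a b (0, 0)) / volume (Dy a b (0, 0)))
        * volume (E \ ⋃ p ∈ famF w a b n₀ j, Dy a b p) := by
    refine compl_bound hw hab _ hLt _ (fun x hx => hE hx.1) ?_
    intro q hq0 hql
    obtain ⟨p, hp, hsub⟩ := inv5 q hq0 hql
    apply eq_empty_of_forall_notMem
    rintro x ⟨hx1, hx2⟩
    exact hx1.2 (mem_biUnion hp (Dy_subset hab hsub hx2))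
  calc wMeas w E
      ≤ wMeas w ((E ∩ ⋃ p ∈ famF w a b n₀ j, Dy a b p)
          ∪ (E \ ⋃ p ∈ famF w a b n₀ j, Dy a b p)) := by
        refine measure_mono (fun x hx => ?_)
        by_cases h : x ∈ ⋃ p ∈ famF w a b n₀ j, Dy a b p
        · exact Or.inl ⟨hx, h⟩
        · exact Or.inr ⟨hx, h⟩
  _ ≤ wMeas w (E ∩ ⋃ p ∈ famF w a b n₀ j, Dy a b p)
      + wMeas w (E \ ⋃ p ∈ famF w a b n₀ j, Dy a b p) := measure_union_le _ _
  _ ≤ 2⁻¹ ^ j * wMeas w (Dy a b (0, 0))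
      + 2 ^ ((n₀ + 1) * j) * (wMeas w (Dy a b (0, 0)) / volume (Dy a b (0, 0)))
        * volume E :=
      add_le_add (le_trans (measure_mono inter_subset_right) inv4)
        (le_trans hcompl (mul_le_mul_right (measure_mono diff_subset) _))
  _ = _ := by rw [hroot_ν, hroot_v]

lemma endgame {NQ NE τ A : ℝ} (hNE0 : 0 ≤ NE) (hNEQ : NE ≤ NQ) (hτ0 : 0 < τ) (hτ1 : τ ≤ 1)
    (hA : 1 ≤ A) {n₀ : ℕ} (hn₀ : (n₀ : ℝ) ≤ 8 * A + 1)
    (key : ∀ j : ℕ, NE ≤ (1 / 2 : ℝ) ^ j * NQ + 2 ^ ((n₀ + 1) * j) * τ * NQ) :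
    NE ≤ 2 * NQ * τ ^ ((1 / 22) / A) := by
  have hNQ0 : 0 ≤ NQ := le_trans hNE0 hNEQ
  set N : ℕ := n₀ + 2 with hN
  have hNpos : (0 : ℝ) < N := by positivity
  have hNA : (N : ℝ) ≤ 11 * A := by
    push_cast [hN]
    nlinarith
  set lg := Real.logb 2 τ⁻¹ with hlg
  have hlg0 : 0 ≤ lg := Real.logb_nonneg (by norm_num) (one_le_inv_iff₀.mpr ⟨hτ0, hτ1⟩)
  set j := ⌊lg / N⌋₊ with hj
  have hj1 : (j : ℝ) * N ≤ lg := by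
    rw [← le_div_iff₀ hNpos]
    exact Nat.floor_le (by positivity)
  have hj2 : lg < ((j : ℝ) + 1) * N := by
    rw [← div_lt_iff₀ hNpos]
    exact Nat.lt_floor_add_one _
  have h2lg : (2 : ℝ) ^ lg = τ⁻¹ := Real.rpow_logb (by norm_num) (by norm_num) (by positivity)
  have hjN : (2 : ℝ) ^ ((j : ℝ) * N) ≤ τ⁻¹ := by
    rw [← h2lg]
    exact Real.rpow_le_rpow_of_exponent_le (by norm_num) hj1
  have hpow1 : (2 : ℝ) ^ ((n₀ + 1) * j) * τ ≤ (1 / 2 : ℝ) ^ j := by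
    have hsplit : (2 : ℝ) ^ ((n₀ + 1) * j) * 2 ^ j = 2 ^ (j * N) := by
      rw [← pow_add]; congr 1; rw [hN]; ring
    have h2jN : (2 : ℝ) ^ (j * N) * τ ≤ 1 := by
      have hc : ((2 : ℝ) ^ (j * N) : ℝ) = (2 : ℝ) ^ ((j : ℝ) * (N : ℝ)) := by
        rw [← Real.rpow_natCast 2 (j * N)]
        congr 1
        push_cast
        ring
      rw [hc]
      calc (2 : ℝ) ^ ((j : ℝ) * (N : ℝ)) * τ ≤ τ⁻¹ * τ :=
            mul_le_mul_of_nonneg_right hjN hτ0.le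
      _ = 1 := inv_mul_cancel₀ hτ0.ne'
    have h2j : (0 : ℝ) < 2 ^ j := by positivity
    calc (2 : ℝ) ^ ((n₀ + 1) * j) * τ = 2 ^ ((n₀ + 1) * j) * τ * 2 ^ j / 2 ^ j := by
          field_simp
    _ ≤ 1 / 2 ^ j := by
          gcongr
          calc (2 : ℝ) ^ ((n₀ + 1) * j) * τ * 2 ^ j = 2 ^ (j * N) * τ := by
                rw [mul_right_comm, hsplit]
          _ ≤ 1 := h2jN
    _ = (1 / 2 : ℝ) ^ j := by rw [div_pow, one_pow]
  have hkey2 : NE ≤ 2 * ((1 / 2 : ℝ) ^ j * NQ) := by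
    calc NE ≤ (1 / 2 : ℝ) ^ j * NQ + 2 ^ ((n₀ + 1) * j) * τ * NQ := key j
    _ ≤ (1 / 2 : ℝ) ^ j * NQ + (1 / 2 : ℝ) ^ j * NQ :=
        add_le_add_right (mul_le_mul_of_nonneg_right hpow1 hNQ0) _
    _ = 2 * ((1 / 2 : ℝ) ^ j * NQ) := by ring
  have hτeq : τ = (2 : ℝ) ^ (-lg) := by
    rw [Real.rpow_neg (by norm_num), h2lg, inv_inv]
  have hτN : τ ^ ((1 : ℝ) / N) = (2 : ℝ) ^ (-(lg / N)) := by
    rw [hτeq, ← Real.rpow_mul (by norm_num : (0 : ℝ) ≤ 2)]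
    congr 1
    ring
  have hhalf : ((1 / 2 : ℝ)) ^ j ≤ 2 * τ ^ ((1 : ℝ) / N) := by
    have hdd : lg / N < (j : ℝ) + 1 := (div_lt_iff₀ hNpos).mpr hj2
    have hexp : -(j : ℝ) ≤ 1 - lg / N := by linarith
    calc ((1 / 2 : ℝ)) ^ j = 2 ^ (-(j : ℝ)) := by
          rw [div_pow, one_pow, Real.rpow_neg (by norm_num : (0 : ℝ) ≤ 2),
            Real.rpow_natCast, one_div]
    _ ≤ 2 ^ ((1 : ℝ) - lg / N) := Real.rpow_le_rpow_of_exponent_le (by norm_num) hexp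
    _ = 2 * τ ^ ((1 : ℝ) / N) := by
          rw [Real.rpow_sub (by norm_num), Real.rpow_one, hτN,
            Real.rpow_neg (by norm_num), div_eq_mul_inv]
  have hs2 : τ ^ ((1 : ℝ) / N) = (τ ^ ((1 : ℝ) / (2 * N))) ^ 2 := by
    rw [← Real.rpow_natCast (τ ^ ((1 : ℝ) / (2 * N))) 2, ← Real.rpow_mul hτ0.le]
    congr 1
    push_cast
    field_simp
  set s := τ ^ ((1 : ℝ) / (2 * N)) with hs
  have hs0 : 0 ≤ s := Real.rpow_nonneg hτ0.le _
  have hsr : s ≤ τ ^ ((1 / 22 : ℝ) / A) := by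
    apply Real.rpow_le_rpow_of_exponent_ge hτ0 hτ1
    rw [div_le_div_iff₀ (by linarith : (0 : ℝ) < A) (by positivity : (0 : ℝ) < 2 * N)]
    nlinarith
  have hfin : NE ≤ 4 * NQ * s ^ 2 := by
    calc NE ≤ 2 * ((1 / 2 : ℝ) ^ j * NQ) := hkey2
    _ ≤ 2 * ((2 * τ ^ ((1 : ℝ) / N)) * NQ) :=
        mul_le_mul_of_nonneg_left (mul_le_mul_of_nonneg_right hhalf hNQ0) (by norm_num)
    _ = 4 * NQ * s ^ 2 := by rw [hs2]; ring
  rcases le_or_gt s (1 / 2) with hcase | hcase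
  · calc NE ≤ 4 * NQ * s ^ 2 := hfin
    _ ≤ 4 * NQ * ((1 / 2) * s) := by
        have hss : s ^ 2 ≤ (1 / 2) * s := by nlinarith
        exact mul_le_mul_of_nonneg_left hss (by positivity)
    _ = 2 * NQ * s := by ring
    _ ≤ 2 * NQ * τ ^ ((1 / 22 : ℝ) / A) := mul_le_mul_of_nonneg_left hsr (by positivity)
  · have ht : (1 / 2 : ℝ) < τ ^ ((1 / 22 : ℝ) / A) := lt_of_lt_of_le hcase hsr
    calc NE ≤ NQ := hNEQ
    _ ≤ 2 * NQ * τ ^ ((1 / 22 : ℝ) / A) := by nlinarith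

end AInfAux

open AInfAux in
/-- Quantitative `A∞` estimate: `w(E) ≤ 2·w(Q)·(|E|/|Q|)^{c/[w]_{A∞}}` for measurable
subsets `E` of an interval `Q`. -/
theorem ainfty_subset_estimate :
    ∃ c : ℝ, 0 < c ∧
      ∀ w : ℝ → ℝ, IsWeight w → AInf w ≠ ⊤ →
      ∀ a b : ℝ, a < b →
      ∀ E : Set ℝ, MeasurableSet E → E ⊆ Set.Ioo a b →
        wMeas w E ≤ 2 * wMeas w (Set.Ioo a b) *
          (volume E / volume (Set.Ioo a b)) ^ (c / (AInf w).toReal) := by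
  refine ⟨1 / 22, by norm_num, ?_⟩
  intro w hw hAt a b hab E _hEm hE
  have hA1 : 1 ≤ AInf w := one_le_AInf hw hab
  set A := (AInf w).toReal with hAdef
  have hA1R : (1 : ℝ) ≤ A := by
    rw [hAdef, ← ENNReal.toReal_one]
    exact ENNReal.toReal_mono hAt hA1
  set n₀ := ⌈8 * A⌉₊ with hn₀def
  have hn₀R : (n₀ : ℝ) ≤ 8 * A + 1 := le_of_lt (Nat.ceil_lt_add_one (by positivity))
  have hn₀E : 8 * AInf w ≤ (n₀ : ℝ≥0∞) := by
    have h1 : AInf w = ENNReal.ofReal A := (ENNReal.ofReal_toReal hAt).symm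
    rw [h1]
    calc (8 : ℝ≥0∞) * ENNReal.ofReal A = ENNReal.ofReal (8 * A) := by
          rw [ENNReal.ofReal_mul (by norm_num)]
          norm_num
    _ ≤ ENNReal.ofReal (n₀ : ℝ) := ENNReal.ofReal_le_ofReal (Nat.le_ceil _)
    _ = (n₀ : ℝ≥0∞) := ENNReal.ofReal_natCast n₀
  rcases eq_or_ne (volume E) 0 with hE0 | hE0
  · have hz : wMeas w E = 0 := wMeas_ac w hE0
    rw [hz]
    exact zero_le
  have hνQ0 : wMeas w (Set.Ioo a b) ≠ 0 := (wMeas_Ioo_pos hw hab).ne'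
  have hνQt : wMeas w (Set.Ioo a b) ≠ ⊤ := (wMeas_Ioo_lt_top hw a b).ne
  have hνEt : wMeas w E ≠ ⊤ := ne_top_of_le_ne_top hνQt (measure_mono hE)
  have hvQ : volume (Set.Ioo a b) = ENNReal.ofReal (b - a) := Real.volume_Ioo
  have hvQ0 : volume (Set.Ioo a b) ≠ 0 := by
    rw [hvQ]
    simp only [ne_eq, ENNReal.ofReal_eq_zero, not_le]
    linarith
  have hvQt : volume (Set.Ioo a b) ≠ ⊤ := by rw [hvQ]; exact ENNReal.ofReal_ne_top
  have hvEt : volume E ≠ ⊤ := ne_top_of_le_ne_top hvQt (measure_mono hE)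
  set NE := (wMeas w E).toReal with hNEdef
  set NQ := (wMeas w (Set.Ioo a b)).toReal with hNQdef
  set VE := (volume E).toReal with hVEdef
  set VQ := (volume (Set.Ioo a b)).toReal with hVQdef
  have hVE0 : 0 < VE := ENNReal.toReal_pos hE0 hvEt
  have hVQ0 : 0 < VQ := ENNReal.toReal_pos hvQ0 hvQt
  set τ := VE / VQ with hτdef
  have hτ0 : 0 < τ := div_pos hVE0 hVQ0
  have hτ1 : τ ≤ 1 := by
    rw [hτdef, div_le_one hVQ0]
    exact ENNReal.toReal_mono hvQt (measure_mono hE)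
  have hkeyR : ∀ j : ℕ, NE ≤ (1 / 2 : ℝ) ^ j * NQ + 2 ^ ((n₀ + 1) * j) * τ * NQ := by
    intro j
    have h := key_estimate hw hab hA1 hAt n₀ hn₀E E hE j
    have hfin1 : (2 : ℝ≥0∞)⁻¹ ^ j * wMeas w (Set.Ioo a b) ≠ ⊤ :=
      ENNReal.mul_ne_top (ENNReal.pow_ne_top (by simp)) hνQt
    have hfin2 : (2 : ℝ≥0∞) ^ ((n₀ + 1) * j)
        * (wMeas w (Set.Ioo a b) / ENNReal.ofReal (b - a)) * volume E ≠ ⊤ :=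
      ENNReal.mul_ne_top (ENNReal.mul_ne_top (ENNReal.pow_ne_top (by simp))
        (by rw [← hvQ]; exact (ENNReal.div_lt_top hνQt hvQ0).ne)) hvEt
    have hR := (ENNReal.toReal_le_toReal hνEt (ENNReal.add_ne_top.mpr ⟨hfin1, hfin2⟩)).mpr h
    rw [ENNReal.toReal_add hfin1 hfin2] at hR
    have e1 : ((2 : ℝ≥0∞)⁻¹ ^ j * wMeas w (Set.Ioo a b)).toReal = (1 / 2 : ℝ) ^ j * NQ := by
      rw [ENNReal.toReal_mul, ENNReal.toReal_pow, ENNReal.toReal_inv]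
      norm_num
      rfl
    have e2 : ((2 : ℝ≥0∞) ^ ((n₀ + 1) * j)
        * (wMeas w (Set.Ioo a b) / ENNReal.ofReal (b - a)) * volume E).toReal
        = 2 ^ ((n₀ + 1) * j) * (NQ / VQ) * VE := by
      rw [ENNReal.toReal_mul, ENNReal.toReal_mul, ENNReal.toReal_pow, ENNReal.toReal_div]
      rw [hNQdef, hVQdef, hVEdef, hvQ]
      norm_num
    rw [e1, e2] at hR
    have e3 : 2 ^ ((n₀ + 1) * j) * (NQ / VQ) * VE = 2 ^ ((n₀ + 1) * j) * τ * NQ := by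
      rw [hτdef]
      field_simp
    linarith [hR]
  have hmain : NE ≤ 2 * NQ * τ ^ ((1 / 22 : ℝ) / A) :=
    endgame ENNReal.toReal_nonneg (ENNReal.toReal_mono hνQt (measure_mono hE))
      hτ0 hτ1 hA1R hn₀R hkeyR
  have hdiv : volume E / volume (Set.Ioo a b) = ENNReal.ofReal τ := by
    have hne : volume E / volume (Set.Ioo a b) ≠ ⊤ := (ENNReal.div_lt_top hvEt hvQ0).ne
    rw [← ENNReal.ofReal_toReal hne, ENNReal.toReal_div]
  rw [hdiv, ENNReal.ofReal_rpow_of_pos hτ0]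
  have hgoalE : wMeas w E = ENNReal.ofReal NE := (ENNReal.ofReal_toReal hνEt).symm
  have hgoalQ : wMeas w (Set.Ioo a b) = ENNReal.ofReal NQ := (ENNReal.ofReal_toReal hνQt).symm
  rw [hgoalE, hgoalQ]
  calc ENNReal.ofReal NE ≤ ENNReal.ofReal (2 * NQ * τ ^ ((1 / 22 : ℝ) / A)) :=
        ENNReal.ofReal_le_ofReal hmain
  _ = 2 * ENNReal.ofReal NQ * ENNReal.ofReal (τ ^ ((1 / 22 : ℝ) / A)) := by
      rw [ENNReal.ofReal_mul (by positivity), ENNReal.ofReal_mul (by norm_num)]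
      norm_num
end
end
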